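/- arXiv:1405.0379 — 8 statements merged into one kernel-verified Lean document; each statement's English description precedes it below -/
import Mathlib

section
/- Let μ ∈ ℝ and σ > 0, and let W be the Gaussian-log-Gaussian mixture distribution of a wavelet coefficient, i.e. the probability measure on ℝ obtained by drawing s from the Gaussian distribution N(μ, σ²) and then, conditionally on s, drawing w from N(0, exp(s)); formally W = (gaussianReal μ σ²).bind (fun s => gaussianReal 0 (exp s)). Then the second moment of W is ∫ x² dW(x) = exp(μ + σ²/2). -/
open MeasureTheory ProbabilityTheory Real
open scoped NNReal ENNReal

section Aux

open Filter Set Asymptotics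

/-- `x * exp (-b * x ^ 2)` tends to `0` at `+∞`. -/
lemma aux_tendsto_mul_exp_atTop {b : ℝ} (hb : 0 < b) :
    Tendsto (fun x : ℝ => x * rexp (-b * x ^ 2)) atTop (nhds 0) := by
  have h := rpow_mul_exp_neg_mul_sq_isLittleO_exp_neg hb 1
  have h2 : Tendsto (fun x : ℝ => rexp (-(1/2) * x)) atTop (nhds 0) := by
    have : Tendsto (fun x : ℝ => -(1/2) * x) atTop atBot :=
      (tendsto_const_mul_atBot_of_neg (by norm_num)).mpr tendsto_id
    exact Real.tendsto_exp_atBot.comp this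
  have h3 := h.isBigO.trans_tendsto h2
  refine h3.congr' ?_
  filter_upwards [eventually_ge_atTop (0:ℝ)] with x hx
  rw [Real.rpow_one]

/-- Integral of `x ^ 2 * exp (-b * x ^ 2)` over `ℝ`. -/
lemma aux_integral_sq_exp {b : ℝ} (hb : 0 < b) :
    ∫ x : ℝ, x ^ 2 * rexp (-b * x ^ 2) = (2 * b)⁻¹ * Real.sqrt (π / b) := by
  set F : ℝ → ℝ := fun x => -(2 * b)⁻¹ * (x * rexp (-b * x ^ 2)) with hF
  set G : ℝ → ℝ := fun x => x ^ 2 * rexp (-b * x ^ 2) - (2 * b)⁻¹ * rexp (-b * x ^ 2) with hG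
  have hint_sq : Integrable (fun x : ℝ => x ^ 2 * rexp (-b * x ^ 2)) := by
    have := integrable_rpow_mul_exp_neg_mul_sq hb (s := 2) (by norm_num)
    simpa [Real.rpow_natCast] using this
  have hint_exp : Integrable (fun x : ℝ => rexp (-b * x ^ 2)) := integrable_exp_neg_mul_sq hb
  have hG_int : Integrable G := hint_sq.sub (hint_exp.const_mul _)
  have hderiv : ∀ x : ℝ, HasDerivAt F (G x) x := by
    intro x
    have h1 : HasDerivAt (fun y : ℝ => -b * y ^ 2) (-b * (2 * x ^ 1)) x :=
      (hasDerivAt_pow 2 x).const_mul (-b)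
    have h2 := h1.exp
    have h3 : HasDerivAt (fun y : ℝ => -(2 * b)⁻¹ * (y * rexp (-b * y ^ 2))) _ x := ((hasDerivAt_id x).mul h2).const_mul (-(2 * b)⁻¹)
    convert h3 using 1
    simp only [hG, id_eq, pow_one]
    field_simp
    ring
  have htop : Tendsto F atTop (nhds 0) := by
    have h := (aux_tendsto_mul_exp_atTop hb).const_mul (-(2 * b)⁻¹)
    rw [mul_zero] at h
    exact h
  have hbot : Tendsto F atBot (nhds 0) := by
    have hodd : ∀ x : ℝ, F (-x) = -F x := by
      intro x; simp only [hF]; ring_nf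
    have h1 : Tendsto (fun x : ℝ => F (-x)) atTop (nhds 0) := by
      simp only [hodd]
      simpa using htop.neg
    have h2 : Tendsto (fun x : ℝ => (-x : ℝ)) atBot atTop := tendsto_neg_atBot_atTop
    have := h1.comp h2
    simpa [Function.comp_def] using this
  have hIoi : ∫ x in Set.Ioi (0:ℝ), G x = 0 - F 0 :=
    integral_Ioi_of_hasDerivAt_of_tendsto (hderiv 0).continuousAt.continuousWithinAt
      (fun x _ => hderiv x) hG_int.integrableOn htop
  have hIic : ∫ x in Set.Iic (0:ℝ), G x = F 0 - 0 :=
    integral_Iic_of_hasDerivAt_of_tendsto (hderiv 0).continuousAt.continuousWithinAt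
      (fun x _ => hderiv x) hG_int.integrableOn hbot
  have hsplit : ∫ x, G x = 0 := by
    rw [← setIntegral_univ, ← Set.Iic_union_Ioi (a := (0:ℝ)),
      setIntegral_union (Set.Iic_disjoint_Ioi le_rfl) measurableSet_Ioi
        hG_int.integrableOn hG_int.integrableOn, hIoi, hIic]
    ring
  have := integral_sub hint_sq (hint_exp.const_mul ((2 * b)⁻¹))
  rw [hG] at hsplit
  rw [hsplit] at this
  have h0 := this.symm
  rw [sub_eq_zero] at h0
  rw [h0, integral_const_mul, integral_gaussian]

/-- Second moment of a centered Gaussian. -/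
lemma aux_integral_sq_gaussianReal {v : ℝ≥0} (hv : v ≠ 0) :
    ∫ x, x ^ 2 ∂(gaussianReal 0 v) = (v : ℝ) := by
  have hv' : (0:ℝ) < v := by exact_mod_cast pos_iff_ne_zero.mpr hv
  rw [gaussianReal_of_var_ne_zero _ hv]
  have hpdf : gaussianPDF 0 v = fun x => ((gaussianPDFReal 0 v x).toNNReal : ℝ≥0∞) := by
    ext x; rfl
  rw [hpdf, integral_withDensity_eq_integral_smul
    ((measurable_gaussianPDFReal 0 v).real_toNNReal) (fun x => x ^ 2)]
  have heq : ∀ x : ℝ, (gaussianPDFReal 0 v x).toNNReal • (x ^ 2)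
      = (Real.sqrt (2 * π * v))⁻¹ * (x ^ 2 * rexp (-(2 * v : ℝ)⁻¹ * x ^ 2)) := by
    intro x
    rw [NNReal.smul_def, smul_eq_mul, Real.coe_toNNReal _ (gaussianPDFReal_nonneg 0 v x)]
    simp only [gaussianPDFReal, sub_zero]
    rw [neg_div, div_eq_inv_mul]
    ring_nf
  simp_rw [heq]
  rw [integral_const_mul, aux_integral_sq_exp (by positivity)]
  rw [show π / (2 * (v:ℝ))⁻¹ = 2 * π * v by field_simp]
  rw [show (2 * (2 * (v:ℝ))⁻¹)⁻¹ = (v:ℝ) by field_simp]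
  have hs : Real.sqrt (2 * π * v) ≠ 0 := by positivity
  field_simp

/-- Completing the square: `pdf μ v * exp = exp (μ + v/2) * pdf (μ+v) v`. -/
lemma aux_pdf_mul_exp (μ : ℝ) (v : ℝ≥0) (x : ℝ) :
    gaussianPDFReal μ v x * rexp x
      = rexp (μ + v / 2) * gaussianPDFReal (μ + v) v x := by
  by_cases hv : v = 0
  · simp [hv]
  have hv' : (0:ℝ) < v := by exact_mod_cast pos_iff_ne_zero.mpr hv
  simp only [gaussianPDFReal]
  conv_lhs => rw [mul_assoc, ← Real.exp_add]
  conv_rhs => rw [mul_comm (rexp (μ + (v:ℝ) / 2)), mul_assoc, ← Real.exp_add]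
  congr 1
  rw [Real.exp_eq_exp]
  field_simp
  ring

/-- Integral of `exp` against a Gaussian: the moment generating function at 1. -/
lemma aux_integral_exp_gaussianReal (μ : ℝ) {v : ℝ≥0} (hv : v ≠ 0) :
    ∫ x, rexp x ∂(gaussianReal μ v) = rexp (μ + v / 2) := by
  rw [gaussianReal_of_var_ne_zero _ hv]
  have hpdf : gaussianPDF μ v = fun x => ((gaussianPDFReal μ v x).toNNReal : ℝ≥0∞) := by
    ext x; rfl
  rw [hpdf, integral_withDensity_eq_integral_smul
    ((measurable_gaussianPDFReal μ v).real_toNNReal) (fun x => rexp x)]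
  have heq : ∀ x : ℝ, (gaussianPDFReal μ v x).toNNReal • rexp x
      = rexp (μ + v / 2) * gaussianPDFReal (μ + v) v x := by
    intro x
    rw [NNReal.smul_def, smul_eq_mul, Real.coe_toNNReal _ (gaussianPDFReal_nonneg μ v x)]
    exact aux_pdf_mul_exp μ v x
  simp_rw [heq]
  rw [integral_const_mul, integral_gaussianPDFReal_eq_one _ hv, mul_one]

/-- Integrability of `exp` against a Gaussian. -/
lemma aux_integrable_exp_gaussianReal (μ : ℝ) {v : ℝ≥0} (hv : v ≠ 0) :
    Integrable (fun x => rexp x) (gaussianReal μ v) := by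
  rw [gaussianReal_of_var_ne_zero _ hv]
  have hpdf : gaussianPDF μ v = fun x => ((gaussianPDFReal μ v x).toNNReal : ℝ≥0∞) := by
    ext x; rfl
  rw [hpdf, integrable_withDensity_iff_integrable_smul
    ((measurable_gaussianPDFReal μ v).real_toNNReal)]
  have heq : ∀ x : ℝ, (gaussianPDFReal μ v x).toNNReal • rexp x
      = rexp (μ + v / 2) * gaussianPDFReal (μ + v) v x := by
    intro x
    rw [NNReal.smul_def, smul_eq_mul, Real.coe_toNNReal _ (gaussianPDFReal_nonneg μ v x)]
    exact aux_pdf_mul_exp μ v x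
  simp_rw [heq]
  exact (integrable_gaussianPDFReal (μ + v) v).const_mul _

/-- Integrability of the second moment function against a centered Gaussian. -/
lemma aux_integrable_sq_gaussianReal {v : ℝ≥0} (hv : v ≠ 0) :
    Integrable (fun x => x ^ 2) (gaussianReal 0 v) := by
  have hv' : (0:ℝ) < v := by exact_mod_cast pos_iff_ne_zero.mpr hv
  rw [gaussianReal_of_var_ne_zero _ hv]
  have hpdf : gaussianPDF 0 v = fun x => ((gaussianPDFReal 0 v x).toNNReal : ℝ≥0∞) := by
    ext x; rfl
  rw [hpdf, integrable_withDensity_iff_integrable_smul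
    ((measurable_gaussianPDFReal 0 v).real_toNNReal)]
  have heq : ∀ x : ℝ, (gaussianPDFReal 0 v x).toNNReal • (x ^ 2)
      = (Real.sqrt (2 * π * v))⁻¹ * (x ^ 2 * rexp (-(2 * v : ℝ)⁻¹ * x ^ 2)) := by
    intro x
    rw [NNReal.smul_def, smul_eq_mul, Real.coe_toNNReal _ (gaussianPDFReal_nonneg 0 v x)]
    simp only [gaussianPDFReal, sub_zero]
    rw [neg_div, div_eq_inv_mul]
    ring_nf
  simp_rw [heq]
  refine Integrable.const_mul ?_ _
  have := integrable_rpow_mul_exp_neg_mul_sq (b := (2 * (v:ℝ))⁻¹) (by positivity)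
    (s := 2) (by norm_num)
  simpa [Real.rpow_natCast] using this

/-- The GLG kernel is measurable. -/
lemma aux_measurable_kernel :
    Measurable (fun s : ℝ => gaussianReal 0 (Real.exp s).toNNReal) := by
  rw [Measure.measurable_measure]
  intro A hA
  have h1 : ∀ s : ℝ, gaussianReal 0 (Real.exp s).toNNReal A
      = ∫⁻ x, (Set.univ ×ˢ A).indicator
          (fun p : ℝ × ℝ =>
            ENNReal.ofReal ((Real.sqrt (2 * π * rexp p.1))⁻¹
              * rexp (-(p.2 - 0) ^ 2 / (2 * rexp p.1)))) (s, x) := by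
    intro s
    have hvs : ((Real.exp s).toNNReal : ℝ≥0) ≠ 0 :=
      (Real.toNNReal_pos.mpr (Real.exp_pos s)).ne'
    rw [gaussianReal_of_var_ne_zero _ hvs, withDensity_apply _ hA,
      ← lintegral_indicator hA]
    congr 1
    ext x
    by_cases hx : x ∈ A <;>
      simp [Set.indicator, hx, gaussianPDF, gaussianPDFReal,
        Real.coe_toNNReal _ (Real.exp_pos s).le]
  simp_rw [h1]
  apply Measurable.lintegral_prod_right'
  apply Measurable.indicator _ (MeasurableSet.univ.prod hA)
  apply Measurable.ennreal_ofReal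
  fun_prop

end Aux

/-- The second moment of the Gaussian-log-Gaussian mixture distribution with
hidden-state mean `μ` and standard deviation `σ > 0` equals `exp (μ + σ²/2)`. -/
theorem glg_second_moment (μ : ℝ) (σ : ℝ≥0) (hσ : 0 < σ)
    (W : Measure ℝ)
    (hW : W = (gaussianReal μ (σ ^ 2)).bind
      (fun s => gaussianReal 0 (Real.exp s).toNNReal)) :
    ∫ x, x ^ 2 ∂W = Real.exp (μ + (σ : ℝ) ^ 2 / 2) := by
  have hσ2 : (σ ^ 2 : ℝ≥0) ≠ 0 := by positivity
  have hmeas_sq : Measurable (fun x : ℝ => ENNReal.ofReal (x ^ 2)) :=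
    (measurable_id.pow_const 2).ennreal_ofReal
  have h1 : ∫ x, x ^ 2 ∂W = (∫⁻ x, ENNReal.ofReal (x ^ 2) ∂W).toReal := by
    rw [integral_eq_lintegral_of_nonneg_ae (ae_of_all _ fun x => sq_nonneg x)
      (measurable_id.pow_const 2).aestronglyMeasurable]
  rw [h1, hW, MeasureTheory.Measure.lintegral_bind aux_measurable_kernel.aemeasurable
    hmeas_sq.aemeasurable]
  have hinner : ∀ s : ℝ, ∫⁻ x, ENNReal.ofReal (x ^ 2) ∂(gaussianReal 0 (Real.exp s).toNNReal)
      = ENNReal.ofReal (rexp s) := by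
    intro s
    have hvs : ((Real.exp s).toNNReal : ℝ≥0) ≠ 0 :=
      (Real.toNNReal_pos.mpr (Real.exp_pos s)).ne'
    rw [← ofReal_integral_eq_lintegral_ofReal (aux_integrable_sq_gaussianReal hvs)
      (ae_of_all _ fun x => sq_nonneg x), aux_integral_sq_gaussianReal hvs,
      Real.coe_toNNReal _ (Real.exp_pos s).le]
  simp_rw [hinner]
  rw [← ofReal_integral_eq_lintegral_ofReal (aux_integrable_exp_gaussianReal μ hσ2)
    (ae_of_all _ fun x => (Real.exp_pos x).le),
    aux_integral_exp_gaussianReal μ hσ2]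
  rw [ENNReal.toReal_ofReal (Real.exp_pos _).le]
  norm_num
end

section
/- Consider the GLG tree construction of hidden states s₁,…,sₙ. Then for all nodes i, j, the covariance satisfies Cov(sᵢ, sⱼ) = Σ_{h₀ ∈ P(1,i) ∩ P(1,j)} κ²_{ρ(h₀)} · (Π_{h₁ ∈ P(h₀,ρ(i))} β_{h₁}) · (Π_{h₂ ∈ P(h₀,ρ(j))} β_{h₂}), where the sum is over the common ancestors h₀ of i and j (nodes on both root-to-i and root-to-j paths), κ₀ = σ₀, and a product over an empty path (the case h₀ = i, resp. h₀ = j) equals 1. -/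
open MeasureTheory ProbabilityTheory Real
open scoped NNReal Classical ENNReal

lemma myrpow_two (x : ℝ) : x ^ (2:ℝ) = x ^ (2:ℕ) := by
  rw [← Real.rpow_natCast x 2]; norm_num

lemma myint_comp_neg (f : ℝ → ℝ) : ∫ x, f (-x) = ∫ x, f x := by
  have h := MeasureTheory.integral_map_equiv (μ := (volume : Measure ℝ)) (MeasurableEquiv.neg ℝ) f
  rw [show (Measure.map (MeasurableEquiv.neg ℝ) (volume : Measure ℝ)) = volume from
    Measure.map_neg_eq_self _] at h
  simpa using h.symm

lemma myint_x_gauss {b : ℝ} (hb : 0 < b) : ∫ x : ℝ, x * rexp (-b * x ^ 2) = 0 := by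
  have h := myint_comp_neg (fun x => x * rexp (-b * x ^ 2))
  simp only [neg_sq, neg_mul] at h ⊢
  rw [MeasureTheory.integral_neg] at h
  linarith

lemma myint_sq_gauss_int {b : ℝ} (hb : 0 < b) :
    Integrable (fun x : ℝ => x ^ 2 * rexp (-b * x ^ 2)) := by
  have h := integrable_rpow_mul_exp_neg_mul_sq hb (s := 2) (by norm_num)
  refine h.congr (ae_of_all _ fun x => ?_)
  simp only [myrpow_two]

lemma myint_sq_gauss {b : ℝ} (hb : 0 < b) :
    ∫ x : ℝ, x ^ 2 * rexp (-b * x ^ 2) = √(π / b) / (2 * b) := by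
  have hint := myint_sq_gauss_int hb
  have heven : ∫ x : ℝ, x ^ 2 * rexp (-b * x ^ 2)
      = 2 * ∫ x in Set.Ioi (0:ℝ), x ^ 2 * rexp (-b * x ^ 2) := by
    rw [← intervalIntegral.integral_Iic_add_Ioi (b := (0:ℝ)) hint.integrableOn hint.integrableOn]
    have h2 : ∫ x in Set.Iic (0:ℝ), x ^ 2 * rexp (-b * x ^ 2)
        = ∫ x in Set.Ioi (0:ℝ), x ^ 2 * rexp (-b * x ^ 2) := by
      rw [← neg_zero, ← integral_comp_neg_Ioi]
      simp
    rw [h2]; ring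
  rw [heven]
  have hsub := integral_comp_rpow_Ioi_of_pos
    (g := fun y : ℝ => (2:ℝ)⁻¹ * (y ^ ((1:ℝ)/2) * rexp (-(b * y)))) (p := 2) (by norm_num)
  have heq : ∫ x in Set.Ioi (0:ℝ), x ^ 2 * rexp (-b * x ^ 2)
      = ∫ y in Set.Ioi (0:ℝ), (2:ℝ)⁻¹ * (y ^ ((1:ℝ)/2) * rexp (-(b * y))) := by
    rw [← hsub]
    refine setIntegral_congr_fun measurableSet_Ioi fun x hx => ?_
    have hx0 : (0:ℝ) < x := hx
    show x ^ 2 * rexp (-b * x ^ 2)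
      = (2 * x ^ ((2:ℝ) - 1)) • ((2:ℝ)⁻¹ * ((x ^ (2:ℝ)) ^ ((1:ℝ)/2) * rexp (-(b * x ^ (2:ℝ)))))
    have h1 : ((x:ℝ) ^ (2:ℝ)) ^ ((1:ℝ)/2) = x := by
      rw [← Real.rpow_mul hx0.le]
      norm_num
    rw [h1, myrpow_two, show ((2:ℝ) - 1) = 1 by norm_num, Real.rpow_one, smul_eq_mul]
    ring_nf
  rw [heq, MeasureTheory.integral_const_mul,
    show ((1:ℝ)/2) = (3/2 : ℝ) - 1 by norm_num]
  rw [show (fun y : ℝ => y ^ ((3/2:ℝ) - 1) * rexp (-(b * y))) = fun y : ℝ => y ^ ((3/2:ℝ) - 1) * rexp (-(b * y)) from rfl]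
  rw [Real.integral_rpow_mul_exp_neg_mul_Ioi (by norm_num) hb]
  have hG : Real.Gamma (3/2 : ℝ) = √π / 2 := by
    rw [show (3/2 : ℝ) = 1/2 + 1 by norm_num, Real.Gamma_add_one (by norm_num),
      Real.Gamma_one_half_eq]
    ring
  rw [hG]
  have hb' : b ≠ 0 := hb.ne'
  have h32 : ((1:ℝ)/b) ^ ((3:ℝ)/2) = b⁻¹ * √b⁻¹ := by
    rw [show ((3:ℝ)/2) = 1 + 1/2 by norm_num,
      Real.rpow_add (by positivity), Real.rpow_one, one_div,
      ← Real.sqrt_eq_rpow]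
  rw [h32]
  have hsb : √(π / b) = √π / √b := Real.sqrt_div Real.pi_pos.le b
  have hsbinv : √b⁻¹ = (√b)⁻¹ := Real.sqrt_inv b
  have hsbne : √b ≠ 0 := by positivity
  rw [hsb, hsbinv]
  field_simp


lemma mygauss_swap (m : ℝ) {v : ℝ≥0} (hv : v ≠ 0) (g : ℝ → ℝ) :
    ∫ x, g x ∂(gaussianReal m v) = ∫ x, gaussianPDFReal m v x * g x := by
  rw [gaussianReal_of_var_ne_zero _ hv]
  have hd : gaussianPDF m v
      = fun x => ((Real.toNNReal (gaussianPDFReal m v x) : ℝ≥0) : ℝ≥0∞) := rfl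
  rw [hd, integral_withDensity_eq_integral_smul
    ((measurable_gaussianPDFReal m v).real_toNNReal) g]
  congr 1; funext x
  rw [NNReal.smul_def, smul_eq_mul, Real.coe_toNNReal _ (gaussianPDFReal_nonneg _ _ _)]

lemma mygauss_int_iff (m : ℝ) {v : ℝ≥0} (hv : v ≠ 0) (g : ℝ → ℝ) :
    Integrable g (gaussianReal m v)
      ↔ Integrable (fun x => gaussianPDFReal m v x * g x) volume := by
  rw [gaussianReal_of_var_ne_zero _ hv]
  have hd : gaussianPDF m v
      = fun x => ((Real.toNNReal (gaussianPDFReal m v x) : ℝ≥0) : ℝ≥0∞) := rfl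
  rw [hd, integrable_withDensity_iff_integrable_smul
    ((measurable_gaussianPDFReal m v).real_toNNReal)]
  constructor <;> intro h <;> refine h.congr (ae_of_all _ fun x => ?_) <;>
    simp only [NNReal.smul_def, smul_eq_mul,
      Real.coe_toNNReal _ (gaussianPDFReal_nonneg m v x)]

lemma mygauss_pdf_shift (m : ℝ) {v : ℝ≥0} (x : ℝ) :
    gaussianPDFReal m v (x + m)
      = (√(2*π*(v:ℝ)))⁻¹ * rexp (-(2*(v:ℝ))⁻¹ * x ^ 2) := by
  unfold gaussianPDFReal
  congr 2
  rw [add_sub_cancel_right]; ring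

lemma mygauss_b_pos {v : ℝ≥0} (hv : v ≠ 0) : 0 < (2*(v:ℝ))⁻¹ := by
  have : 0 < (v:ℝ) := by positivity
  positivity

lemma mygauss_norm (m : ℝ) {v : ℝ≥0} (hv : v ≠ 0) :
    (√(2*π*(v:ℝ)))⁻¹ * √(π / (2*(v:ℝ))⁻¹) = 1 := by
  have h1 := integral_gaussianPDFReal_eq_one m hv
  rw [← integral_add_right_eq_self (gaussianPDFReal m v) m] at h1
  simp only [mygauss_pdf_shift] at h1
  rw [MeasureTheory.integral_const_mul, integral_gaussian] at h1
  exact h1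

lemma mygauss_mean (m : ℝ) {v : ℝ≥0} (hv : v ≠ 0) :
    ∫ x, x ∂(gaussianReal m v) = m := by
  rw [mygauss_swap m hv]
  rw [← integral_add_right_eq_self (fun x => gaussianPDFReal m v x * x) m]
  have hb := mygauss_b_pos hv
  set b := (2*(v:ℝ))⁻¹ with hbdef
  set c := (√(2*π*(v:ℝ)))⁻¹ with hcdef
  have hre : (fun x => gaussianPDFReal m v (x + m) * (x + m))
      = fun x => c * (x * rexp (-b * x ^ 2)) + m * (c * rexp (-b * x ^ 2)) := by
    funext x; rw [mygauss_pdf_shift]; ring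
  rw [hre, integral_add ((integrable_mul_exp_neg_mul_sq hb).const_mul c)
    (((integrable_exp_neg_mul_sq hb).const_mul c).const_mul m),
    MeasureTheory.integral_const_mul, MeasureTheory.integral_const_mul,
    MeasureTheory.integral_const_mul, myint_x_gauss hb, integral_gaussian]
  have hnorm := mygauss_norm m hv
  rw [← hbdef, ← hcdef] at hnorm
  rw [hnorm]; ring

lemma mygauss_sq (m : ℝ) {v : ℝ≥0} (hv : v ≠ 0) :
    ∫ x, x ^ 2 ∂(gaussianReal m v) = (v:ℝ) + m ^ 2 := by
  rw [mygauss_swap m hv]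
  rw [← integral_add_right_eq_self (fun x => gaussianPDFReal m v x * x ^ 2) m]
  have hb := mygauss_b_pos hv
  set b := (2*(v:ℝ))⁻¹ with hbdef
  set c := (√(2*π*(v:ℝ)))⁻¹ with hcdef
  have hre : (fun x => gaussianPDFReal m v (x + m) * (x + m) ^ 2)
      = fun x => c * (x ^ 2 * rexp (-b * x ^ 2))
          + ((2*m) * (c * (x * rexp (-b * x ^ 2))) + m ^ 2 * (c * rexp (-b * x ^ 2))) := by
    funext x; rw [mygauss_pdf_shift]; ring
  have hI1 : Integrable (fun x : ℝ => c * (x ^ 2 * rexp (-b * x ^ 2))) :=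
    (myint_sq_gauss_int hb).const_mul c
  have hI2 : Integrable (fun x : ℝ => (2*m) * (c * (x * rexp (-b * x ^ 2)))) :=
    ((integrable_mul_exp_neg_mul_sq hb).const_mul c).const_mul (2*m)
  have hI3 : Integrable (fun x : ℝ => m ^ 2 * (c * rexp (-b * x ^ 2))) :=
    ((integrable_exp_neg_mul_sq hb).const_mul c).const_mul (m^2)
  have hI23 : Integrable (fun x : ℝ => (2*m) * (c * (x * rexp (-b * x ^ 2)))
      + m ^ 2 * (c * rexp (-b * x ^ 2))) := hI2.add hI3
  rw [hre, integral_add hI1 hI23, integral_add hI2 hI3]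
  simp only [MeasureTheory.integral_const_mul]
  rw [myint_x_gauss hb, myint_sq_gauss hb, integral_gaussian]
  have hnorm := mygauss_norm m hv
  rw [← hbdef, ← hcdef] at hnorm
  have hv' : (0:ℝ) < v := by positivity
  have h2b : (2*b)⁻¹ = (v:ℝ) := by rw [hbdef]; field_simp
  calc c * (√(π/b) / (2*b)) + (2*m*(c*0) + m^2*(c*√(π/b)))
      = (c * √(π/b)) * (2*b)⁻¹ + m^2 * (c*√(π/b)) := by
        field_simp
        ring
    _ = (v:ℝ) + m^2 := by rw [hnorm, h2b]; ring

lemma mygauss_memLp2 (m : ℝ) {v : ℝ≥0} (hv : v ≠ 0) :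
    MemLp (id : ℝ → ℝ) 2 (gaussianReal m v) := by
  rw [memLp_two_iff_integrable_sq aestronglyMeasurable_id]
  have : Integrable (fun x : ℝ => x ^ 2) (gaussianReal m v) := by
    rw [mygauss_int_iff m hv]
    have hb := mygauss_b_pos hv
    set b := (2*(v:ℝ))⁻¹ with hbdef
    set c := (√(2*π*(v:ℝ)))⁻¹ with hcdef
    have hF : Integrable (fun x => gaussianPDFReal m v (x + m) * (x + m) ^ 2) volume := by
      have hre : (fun x => gaussianPDFReal m v (x + m) * (x + m) ^ 2)
          = fun x => c * (x ^ 2 * rexp (-b * x ^ 2))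
              + ((2*m) * (c * (x * rexp (-b * x ^ 2))) + m ^ 2 * (c * rexp (-b * x ^ 2))) := by
        funext x; rw [mygauss_pdf_shift]; ring
      rw [hre]
      exact ((myint_sq_gauss_int hb).const_mul c).add
        ((((integrable_mul_exp_neg_mul_sq hb).const_mul c).const_mul (2*m)).add
          (((integrable_exp_neg_mul_sq hb).const_mul c).const_mul (m^2)))
    have h2 := hF.comp_sub_right m
    refine h2.congr (ae_of_all _ fun x => ?_)
    simp
  exact this.congr (ae_of_all _ fun x => by simp)

section Tree
variable {n : ℕ} [NeZero n] (ρ : Fin n → Fin n)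

noncomputable def mycoef (β : Fin n → ℝ) (i h : Fin n) : ℝ :=
  if h = i then 1
  else if (∃ k : ℕ, ρ^[k] i = h) then
    ∏ h₁ ∈ Finset.univ.filter
      (fun h' => (∃ k : ℕ, ρ^[k] (ρ i) = h') ∧ (∃ k : ℕ, ρ^[k] h' = h)), β h₁
  else 0

lemma my_anc_of_parent {i h : Fin n} (ha : ∃ k : ℕ, ρ^[k] (ρ i) = h) :
    ∃ k : ℕ, ρ^[k] i = h := by
  obtain ⟨k, hk⟩ := ha
  exact ⟨k + 1, by rwa [Function.iterate_succ_apply]⟩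

variable (hρ0 : ρ 0 = 0) (hρ : ∀ i : Fin n, i ≠ 0 → ρ i < i)
include hρ0 hρ

lemma my_rho_le (i : Fin n) : ρ i ≤ i := by
  by_cases hi : i = 0
  · subst hi; rw [hρ0]
  · exact (hρ i hi).le

lemma my_iter_le (k : ℕ) (i : Fin n) : ρ^[k] i ≤ i := by
  induction k generalizing i with
  | zero => simp
  | succ k ih =>
    rw [Function.iterate_succ_apply]
    exact le_trans (ih (ρ i)) (my_rho_le ρ hρ0 hρ i)

lemma my_anc_le {i h : Fin n} (ha : ∃ k : ℕ, ρ^[k] i = h) : h ≤ i := by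
  obtain ⟨k, hk⟩ := ha
  exact hk ▸ my_iter_le ρ hρ0 hρ k i

lemma my_parent_anc {i h : Fin n} (hne : h ≠ i) (ha : ∃ k : ℕ, ρ^[k] i = h) :
    ∃ k : ℕ, ρ^[k] (ρ i) = h := by
  obtain ⟨k, hk⟩ := ha
  cases k with
  | zero =>
    simp only [Function.iterate_zero_apply] at hk
    exact absurd hk.symm hne
  | succ k => exact ⟨k, by rwa [Function.iterate_succ_apply] at hk⟩

lemma my_iter_zero (k : ℕ) : ρ^[k] (0 : Fin n) = 0 := by
  induction k with
  | zero => rfl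
  | succ k ih => rw [Function.iterate_succ_apply, hρ0, ih]

lemma mycoef_zero (β : Fin n → ℝ) (h : Fin n) :
    mycoef ρ β 0 h = if h = 0 then 1 else 0 := by
  by_cases h0 : h = 0
  · simp [mycoef, h0]
  · rw [mycoef, if_neg h0, if_neg, if_neg h0]
    rintro ⟨k, hk⟩
    exact h0 (hk ▸ (my_iter_zero ρ hρ0 hρ k).symm ▸ rfl)

lemma mycoef_not_anc (β : Fin n → ℝ) {i h : Fin n} (hna : ¬ ∃ k : ℕ, ρ^[k] i = h) :
    mycoef ρ β i h = 0 := by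
  have hne : h ≠ i := fun he => hna ⟨0, he.symm⟩
  rw [mycoef, if_neg hne, if_neg hna]

lemma mycoef_rec (β : Fin n → ℝ) {i : Fin n} (hi : i ≠ 0) (h : Fin n) :
    mycoef ρ β i h = β (ρ i) * mycoef ρ β (ρ i) h + (if h = i then 1 else 0) := by
  by_cases hhi : h = i
  · subst hhi
    rw [if_pos rfl]
    have h1 : mycoef ρ β (ρ h) h = 0 := by
      apply mycoef_not_anc ρ hρ0 hρ
      rintro ⟨k, hk⟩
      have h2 := my_iter_le ρ hρ0 hρ k (ρ h)
      rw [hk] at h2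
      exact absurd h2 (not_le.mpr (hρ h hi))
    rw [mycoef, if_pos rfl, h1]; ring
  · rw [if_neg hhi, add_zero, mycoef, if_neg hhi]
    by_cases hanc : ∃ k : ℕ, ρ^[k] i = h
    · rw [if_pos hanc]
      have hanc' : ∃ k : ℕ, ρ^[k] (ρ i) = h := my_parent_anc ρ hρ0 hρ hhi hanc
      by_cases hpr : h = ρ i
      · -- path from h to ρ i is {ρ i}
        have hset : Finset.univ.filter
            (fun h' => (∃ k : ℕ, ρ^[k] (ρ i) = h') ∧ (∃ k : ℕ, ρ^[k] h' = h))
            = {ρ i} := by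
          ext h'
          simp only [Finset.mem_filter, Finset.mem_univ, true_and, Finset.mem_singleton]
          constructor
          · rintro ⟨ha1, ha2⟩
            exact le_antisymm (my_anc_le ρ hρ0 hρ ha1) (hpr ▸ my_anc_le ρ hρ0 hρ ha2)
          · rintro rfl
            exact ⟨⟨0, rfl⟩, ⟨0, hpr.symm⟩⟩
        have h1 : mycoef ρ β (ρ i) h = 1 := by rw [mycoef, if_pos hpr]
        rw [hset, Finset.prod_singleton, h1, mul_one]
      · -- general case: split off ρ i from the path
        have hρine : ρ i ≠ 0 := by
          intro h0
          have h1 : h ≤ ρ i := my_anc_le ρ hρ0 hρ hanc'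
          have h2 : h < ρ i := lt_of_le_of_ne h1 hpr
          rw [h0] at h2
          rw [Fin.lt_def] at h2
          simp at h2
        have hrr : ρ (ρ i) < ρ i := hρ _ hρine
        have hnotmem : ρ i ∉ Finset.univ.filter
            (fun h' => (∃ k : ℕ, ρ^[k] (ρ (ρ i)) = h') ∧ (∃ k : ℕ, ρ^[k] h' = h)) := by
          simp only [Finset.mem_filter, Finset.mem_univ, true_and, not_and]
          rintro ⟨k, hk⟩
          have h2 := my_iter_le ρ hρ0 hρ k (ρ (ρ i))
          rw [hk] at h2
          exact absurd (lt_of_le_of_lt h2 hrr) (lt_irrefl _)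
        have hset : Finset.univ.filter
            (fun h' => (∃ k : ℕ, ρ^[k] (ρ i) = h') ∧ (∃ k : ℕ, ρ^[k] h' = h))
            = insert (ρ i) (Finset.univ.filter
              (fun h' => (∃ k : ℕ, ρ^[k] (ρ (ρ i)) = h') ∧ (∃ k : ℕ, ρ^[k] h' = h))) := by
          ext h'
          simp only [Finset.mem_filter, Finset.mem_univ, true_and, Finset.mem_insert]
          constructor
          · rintro ⟨ha1, ha2⟩
            by_cases he : h' = ρ i
            · exact Or.inl he
            · exact Or.inr ⟨my_parent_anc ρ hρ0 hρ he ha1, ha2⟩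
          · rintro (rfl | ⟨ha1, ha2⟩)
            · exact ⟨⟨0, rfl⟩, hanc'⟩
            · exact ⟨my_anc_of_parent ρ ha1, ha2⟩
        have h1 : mycoef ρ β (ρ i) h = ∏ h₁ ∈ Finset.univ.filter
            (fun h' => (∃ k : ℕ, ρ^[k] (ρ (ρ i)) = h') ∧ (∃ k : ℕ, ρ^[k] h' = h)), β h₁ := by
          rw [mycoef, if_neg hpr, if_pos hanc']
        rw [hset, Finset.prod_insert hnotmem, h1]
    · rw [if_neg hanc]
      have h1 : mycoef ρ β (ρ i) h = 0 := by
        apply mycoef_not_anc ρ hρ0 hρ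
        exact fun ha => hanc (my_anc_of_parent ρ ha)
      rw [h1, mul_zero]
end Tree


/-- Covariance of the hidden states in the GLG tree model:
`Cov (sᵢ, sⱼ) = Σ_{h₀ ∈ P(root,i) ∩ P(root,j)} κ²_{ρ(h₀)} (Π_{h₁ ∈ P(h₀,ρ(i))} β h₁)
(Π_{h₂ ∈ P(h₀,ρ(j))} β h₂)`, where the sum is over the common ancestors of `i` and
`j`, `κ` at the (virtual) parent of the root equals `σ₀`, and a product over an empty
path (the case `h₀ = i`, resp. `h₀ = j`) equals `1`. -/
theorem glg_hidden_state_covariance (n : ℕ) [NeZero n]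
    (ρ : Fin n → Fin n) (hρ0 : ρ 0 = 0) (hρ : ∀ i : Fin n, i ≠ 0 → ρ i < i)
    (μ₀ : ℝ) (σ₀ : ℝ≥0) (hσ₀ : 0 < σ₀)
    (α β : Fin n → ℝ) (κ : Fin n → ℝ≥0) (hκ : ∀ i, 0 < κ i)
    {Ω : Type*} [MeasurableSpace Ω] (P : Measure Ω) [IsProbabilityMeasure P]
    (v : Fin n → Ω → ℝ) (hvmeas : ∀ i, Measurable (v i))
    (hindep : iIndepFun v P)
    (hv0 : P.map (v 0) = gaussianReal μ₀ (σ₀ ^ 2))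
    (hvi : ∀ i : Fin n, i ≠ 0 →
      P.map (v i) = gaussianReal (α (ρ i)) (κ (ρ i) ^ 2))
    (s : Fin n → Ω → ℝ)
    (hs0 : s 0 = v 0)
    (hsi : ∀ i : Fin n, i ≠ 0 → s i = fun ω => β (ρ i) * s (ρ i) ω + v i ω) :
    ∀ i j : Fin n,
      (∫ ω, s i ω * s j ω ∂P) - (∫ ω, s i ω ∂P) * (∫ ω, s j ω ∂P) =
        ∑ h₀ ∈ Finset.univ.filter
            (fun h₀ => (∃ k : ℕ, ρ^[k] i = h₀) ∧ (∃ k : ℕ, ρ^[k] j = h₀)),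
          ((if h₀ = 0 then (σ₀ : ℝ) else (κ (ρ h₀) : ℝ)) ^ 2 *
            (if h₀ = i then 1 else
              ∏ h₁ ∈ Finset.univ.filter
                  (fun h => (∃ k : ℕ, ρ^[k] (ρ i) = h) ∧ (∃ k : ℕ, ρ^[k] h = h₀)),
                β h₁) *
            (if h₀ = j then 1 else
              ∏ h₂ ∈ Finset.univ.filter
                  (fun h => (∃ k : ℕ, ρ^[k] (ρ j) = h) ∧ (∃ k : ℕ, ρ^[k] h = h₀)),
                β h₂)) := by
  intro i j
  set M : Fin n → ℝ := fun a => if a = 0 then μ₀ else α (ρ a) with hM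
  set W : Fin n → ℝ≥0 := fun a => if a = 0 then σ₀ ^ 2 else κ (ρ a) ^ 2 with hW
  have hWne : ∀ a, W a ≠ 0 := by
    intro a
    by_cases h : a = 0 <;>
      simp [hW, h, pow_ne_zero, hσ₀.ne', (hκ _).ne']
  have hmap : ∀ a, P.map (v a) = gaussianReal (M a) (W a) := by
    intro a
    by_cases h : a = 0
    · subst h; simpa [hM, hW] using hv0
    · simpa [hM, hW, h] using hvi a h
  have hmean : ∀ a, ∫ ω, v a ω ∂P = M a := by
    intro a
    have h1 : ∫ x, x ∂(P.map (v a)) = ∫ ω, v a ω ∂P :=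
      integral_map (hvmeas a).aemeasurable (f := fun x => x) aestronglyMeasurable_id
    rw [← h1, hmap a, mygauss_mean (M a) (hWne a)]
  have hmem : ∀ a, MemLp (v a) 2 P := by
    intro a
    have h2 := mygauss_memLp2 (M a) (hWne a)
    rw [← hmap a] at h2
    exact (memLp_map_measure_iff aestronglyMeasurable_id (hvmeas a).aemeasurable).mp h2
  have hint : ∀ a, Integrable (v a) P := fun a => (hmem a).integrable one_le_two
  have hintmul : ∀ a b : Fin n, Integrable (fun ω => v a ω * v b ω) P := by
    intro a b
    have h2 : MemLp (v a • v b) 1 P :=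
      (hmem b).smul (hmem a)
    exact h2.integrable le_rfl
  have hD : ∀ a b : Fin n, (∫ ω, v a ω * v b ω ∂P) - M a * M b
      = if a = b then ((W a : ℝ)) else 0 := by
    intro a b
    by_cases hab : a = b
    · subst hab
      rw [if_pos rfl]
      have h1 : ∫ ω, v a ω * v a ω ∂P = (W a : ℝ) + (M a)^2 := by
        have h2 : (fun ω => v a ω * v a ω) = fun ω => (v a ω)^2 := by
          funext ω; ring
        rw [h2]
        have h3 : ∫ ω, (v a ω)^2 ∂P = ∫ x, x^2 ∂(P.map (v a)) := by
          rw [integral_map (hvmeas a).aemeasurable]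
          exact (measurable_id.pow_const 2).aestronglyMeasurable
        rw [h3, hmap a, mygauss_sq (M a) (hWne a)]
      rw [h1]; ring
    · rw [if_neg hab]
      have hIF : IndepFun (v a) (v b) P := hindep.indepFun hab
      have h1 := hIF.integral_fun_mul_eq_mul_integral (hvmeas a).aestronglyMeasurable
        (hvmeas b).aestronglyMeasurable
      have h2 : ∫ ω, v a ω * v b ω ∂P = (∫ ω, v a ω ∂P) * ∫ ω, v b ω ∂P := h1
      rw [h2, hmean, hmean]; ring
  -- representation of the hidden states
  have key : ∀ m : ℕ, ∀ i0 : Fin n, (i0 : ℕ) ≤ m →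
      s i0 = fun ω => ∑ h, mycoef ρ β i0 h * v h ω := by
    intro m
    have hbase : s 0 = fun ω => ∑ h, mycoef ρ β 0 h * v h ω := by
      rw [hs0]
      funext ω
      simp only [mycoef_zero ρ hρ0 hρ β, ite_mul, one_mul, zero_mul,
        Finset.sum_ite_eq', Finset.mem_univ, if_true]
    induction m with
    | zero =>
      intro i0 hi0
      have h0 : i0 = 0 := by
        apply Fin.ext
        rw [Fin.val_zero]
        omega
      subst h0
      exact hbase
    | succ m IH =>
      intro i0 hi0
      by_cases h0 : i0 = 0
      · subst h0; exact hbase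
      · have hlt : (ρ i0 : ℕ) ≤ m := by
          have := hρ i0 h0
          have h2 : (ρ i0 : ℕ) < (i0 : ℕ) := this
          omega
        rw [hsi i0 h0, IH (ρ i0) hlt]
        funext ω
        symm
        calc ∑ h, mycoef ρ β i0 h * v h ω
            = ∑ h, (β (ρ i0) * (mycoef ρ β (ρ i0) h * v h ω)
                + (if h = i0 then 1 else 0) * v h ω) := by
              refine Finset.sum_congr rfl fun h _ => ?_
              rw [mycoef_rec ρ hρ0 hρ β h0 h]; ring
          _ = β (ρ i0) * (∑ h, mycoef ρ β (ρ i0) h * v h ω) + v i0 ω := by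
              rw [Finset.sum_add_distrib, ← Finset.mul_sum]
              simp only [ite_mul, one_mul, zero_mul, Finset.sum_ite_eq',
                Finset.mem_univ, if_true]
  have keyi := key (i : ℕ) i le_rfl
  have keyj := key (j : ℕ) j le_rfl
  -- integrals of the hidden states
  have hsint : ∀ i0 : Fin n, s i0 = (fun ω => ∑ h, mycoef ρ β i0 h * v h ω) →
      ∫ ω, s i0 ω ∂P = ∑ a, mycoef ρ β i0 a * M a := by
    intro i0 hk
    rw [hk, integral_finset_sum _ (fun a _ => (hint a).const_mul _)]
    exact Finset.sum_congr rfl fun a _ => by rw [integral_const_mul, hmean]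
  have hsint2 : ∫ ω, s i ω * s j ω ∂P
      = ∑ a, ∑ b, (mycoef ρ β i a * mycoef ρ β j b) * ∫ ω, v a ω * v b ω ∂P := by
    rw [keyi, keyj]
    have h1 : (fun ω => (∑ a, mycoef ρ β i a * v a ω) * (∑ b, mycoef ρ β j b * v b ω))
        = fun ω => ∑ a, ∑ b, (mycoef ρ β i a * mycoef ρ β j b) * (v a ω * v b ω) := by
      funext ω
      rw [Finset.sum_mul_sum]
      exact Finset.sum_congr rfl fun a _ =>
        Finset.sum_congr rfl fun b _ => by ring
    rw [h1, integral_finset_sum _ (fun a _ =>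
      integrable_finset_sum _ (fun b _ => (hintmul a b).const_mul _))]
    refine Finset.sum_congr rfl fun a _ => ?_
    rw [integral_finset_sum _ (fun b _ => (hintmul a b).const_mul _)]
    exact Finset.sum_congr rfl fun b _ => by rw [integral_const_mul]
  rw [hsint2, hsint i keyi, hsint j keyj]
  have hprod : (∑ a, mycoef ρ β i a * M a) * (∑ b, mycoef ρ β j b * M b)
      = ∑ a, ∑ b, (mycoef ρ β i a * mycoef ρ β j b) * (M a * M b) := by
    rw [Finset.sum_mul_sum]
    exact Finset.sum_congr rfl fun a _ =>
      Finset.sum_congr rfl fun b _ => by ring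
  rw [hprod, ← Finset.sum_sub_distrib]
  have hstep : ∀ a : Fin n,
      ((∑ b, (mycoef ρ β i a * mycoef ρ β j b) * ∫ ω, v a ω * v b ω ∂P)
        - ∑ b, (mycoef ρ β i a * mycoef ρ β j b) * (M a * M b))
      = (mycoef ρ β i a * mycoef ρ β j a) * (W a : ℝ) := by
    intro a
    rw [← Finset.sum_sub_distrib]
    have h1 : ∀ b : Fin n,
        (mycoef ρ β i a * mycoef ρ β j b) * (∫ ω, v a ω * v b ω ∂P)
          - (mycoef ρ β i a * mycoef ρ β j b) * (M a * M b)
        = if a = b then (mycoef ρ β i a * mycoef ρ β j b) * (W a : ℝ) else 0 := by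
      intro b
      rw [← mul_sub, hD a b]
      by_cases hab : a = b
      · rw [if_pos hab, if_pos hab]
      · rw [if_neg hab, if_neg hab, mul_zero]
    rw [Finset.sum_congr rfl (fun b _ => h1 b), Finset.sum_ite_eq, if_pos (Finset.mem_univ a)]
  rw [Finset.sum_congr rfl (fun a _ => hstep a)]
  -- final combinatorial identity
  rw [← Finset.sum_filter_of_ne (p := fun h₀ =>
      (∃ k : ℕ, ρ^[k] i = h₀) ∧ (∃ k : ℕ, ρ^[k] j = h₀)) ?hvanish]
  case hvanish =>
    intro a _ hne
    by_contra hna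
    rw [not_and_or] at hna
    rcases hna with hna | hna
    · rw [mycoef_not_anc ρ hρ0 hρ β hna, zero_mul, zero_mul] at hne
      exact hne rfl
    · rw [mycoef_not_anc ρ hρ0 hρ β hna, mul_zero, zero_mul] at hne
      exact hne rfl
  refine Finset.sum_congr rfl fun a ha => ?_
  rw [Finset.mem_filter] at ha
  obtain ⟨-, hai, haj⟩ := ha
  have hcast : (W a : ℝ) = (if a = 0 then (σ₀ : ℝ) else (κ (ρ a) : ℝ)) ^ 2 := by
    by_cases h : a = 0 <;> simp [hW, h] <;> push_cast <;> ring
  have hci : mycoef ρ β i a = (if a = i then 1 else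
      ∏ h₁ ∈ Finset.univ.filter
        (fun h => (∃ k : ℕ, ρ^[k] (ρ i) = h) ∧ (∃ k : ℕ, ρ^[k] h = a)), β h₁) := by
    by_cases h : a = i
    · rw [mycoef, if_pos h, if_pos h]
    · rw [mycoef, if_neg h, if_pos hai, if_neg h]
  have hcj : mycoef ρ β j a = (if a = j then 1 else
      ∏ h₂ ∈ Finset.univ.filter
        (fun h => (∃ k : ℕ, ρ^[k] (ρ j) = h) ∧ (∃ k : ℕ, ρ^[k] h = a)), β h₂) := by
    by_cases h : a = j
    · rw [mycoef, if_pos h, if_pos h]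
    · rw [mycoef, if_neg h, if_pos haj, if_neg h]
  rw [hci, hcj, hcast]
  ring
end

section
/- Consider the GLG tree construction of hidden states s₁,…,sₙ. Define recursively m₁ = μ₀, t₁ = σ₀², and for i ≥ 2, mᵢ = α_{ρ(i)} + β_{ρ(i)} m_{ρ(i)} and tᵢ = κ²_{ρ(i)} + β²_{ρ(i)} t_{ρ(i)}. Then for every node i, the marginal law of sᵢ is the Gaussian distribution N(mᵢ, tᵢ), i.e. the pushforward law of sᵢ equals gaussianReal mᵢ tᵢ. -/
open MeasureTheory ProbabilityTheory Real
open scoped NNReal ENNReal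

namespace GLGAux

lemma pdf_mul (m₁ m₂ : ℝ) (v₁ v₂ : ℝ≥0) (hv₁ : v₁ ≠ 0) (hv₂ : v₂ ≠ 0) (z x : ℝ) :
    gaussianPDFReal m₁ v₁ x * gaussianPDFReal m₂ v₂ (z - x)
      = gaussianPDFReal (m₁ + m₂) (v₁ + v₂) z
        * gaussianPDFReal (((v₂ : ℝ) * m₁ + (v₁ : ℝ) * (z - m₂)) / ((v₁ : ℝ) + v₂))
            (v₁ * v₂ / (v₁ + v₂)) x := by
  have hA : (0:ℝ) < v₁ := by positivity
  have hB : (0:ℝ) < v₂ := by positivity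
  have hAB : (0:ℝ) < (v₁:ℝ) + v₂ := by linarith
  have hWc : ((v₁ * v₂ / (v₁ + v₂) : ℝ≥0) : ℝ) = (v₁:ℝ) * v₂ / ((v₁:ℝ) + v₂) := by
    push_cast; ring
  have hW : (0:ℝ) < ((v₁ * v₂ / (v₁ + v₂) : ℝ≥0) : ℝ) := by
    rw [hWc]; positivity
  unfold gaussianPDFReal
  have key : ∀ c₁ c₂ c₃ c₄ e₁ e₂ e₃ e₄ : ℝ, c₁ * c₂ = c₃ * c₄ → e₁ + e₂ = e₃ + e₄ →
      (c₁ * rexp e₁) * (c₂ * rexp e₂) = (c₃ * rexp e₃) * (c₄ * rexp e₄) := by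
    intro c₁ c₂ c₃ c₄ e₁ e₂ e₃ e₄ hc he
    calc (c₁ * rexp e₁) * (c₂ * rexp e₂) = (c₁ * c₂) * rexp (e₁ + e₂) := by
          rw [Real.exp_add]; ring
      _ = (c₃ * c₄) * rexp (e₃ + e₄) := by rw [hc, he]
      _ = (c₃ * rexp e₃) * (c₄ * rexp e₄) := by rw [Real.exp_add]; ring
  apply key
  · rw [← mul_inv, ← mul_inv, ← Real.sqrt_mul (by positivity), ← Real.sqrt_mul (by positivity)]
    congr 1
    rw [hWc]
    push_cast
    field_simp
  · rw [hWc]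
    push_cast
    field_simp
    ring

lemma map_add_prod_gaussian (m₁ m₂ : ℝ) (v₁ v₂ : ℝ≥0) (hv₂ : v₂ ≠ 0) :
    ((gaussianReal m₁ v₁).prod (gaussianReal m₂ v₂)).map (fun p : ℝ × ℝ => p.1 + p.2)
      = gaussianReal (m₁ + m₂) (v₁ + v₂) := by
  by_cases hv₁ : v₁ = 0
  · subst hv₁
    rw [gaussianReal_zero_var, Measure.dirac_prod,
      Measure.map_map measurable_add measurable_prodMk_left]
    have h : ((fun p : ℝ × ℝ => p.1 + p.2) ∘ Prod.mk m₁) = (m₁ + ·) := rfl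
    rw [h, gaussianReal_map_const_add, add_comm m₂ m₁, zero_add]
  -- both variances nonzero
  have hsum : v₁ + v₂ ≠ 0 := by
    simp only [ne_eq, add_eq_zero, not_and]; exact fun h => absurd h hv₁
  have hw : v₁ * v₂ / (v₁ + v₂) ≠ 0 := by
    refine div_ne_zero (mul_ne_zero hv₁ hv₂) hsum
  set g₁ := gaussianPDF m₁ v₁ with hg₁
  set g₂ := gaussianPDF m₂ v₂ with hg₂
  ext u hu
  rw [Measure.map_apply measurable_add hu,
    gaussianReal_of_var_ne_zero _ hv₁, gaussianReal_of_var_ne_zero _ hv₂,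
    gaussianReal_of_var_ne_zero _ hsum,
    Measure.prod_apply (measurable_add hu), withDensity_apply _ hu]
  have hS : ∀ x : ℝ, (Prod.mk x ⁻¹' ((fun p : ℝ × ℝ => p.1 + p.2) ⁻¹' u))
      = (fun y => x + y) ⁻¹' u := fun x => rfl
  have hmeas₁ : Measurable g₁ := measurable_gaussianPDF _ _
  have hmeas₂ : Measurable g₂ := measurable_gaussianPDF _ _
  -- inner measure as translated integral
  have hinner : ∀ x : ℝ,
      (volume.withDensity g₂) (Prod.mk x ⁻¹' ((fun p : ℝ × ℝ => p.1 + p.2) ⁻¹' u))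
        = ∫⁻ z, u.indicator (fun _ => (1 : ℝ≥0∞)) z * g₂ (z - x) := by
    intro x
    rw [hS, withDensity_apply _ ((measurable_const_add x) hu),
      ← lintegral_indicator ((measurable_const_add x) hu) g₂]
    have h1 : ∀ y : ℝ, ((fun y => x + y) ⁻¹' u).indicator g₂ y
        = (fun z => u.indicator (fun _ => (1 : ℝ≥0∞)) z * g₂ (z - x)) (x + y) := by
      intro y
      by_cases hy : x + y ∈ u
      · simp [Set.indicator_of_mem, hy, Set.mem_preimage.mpr hy, add_sub_cancel_left]
      · simp [Set.indicator_of_notMem, hy, fun h => hy (Set.mem_preimage.mp h)]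
    exact (lintegral_congr h1).trans (lintegral_add_left_eq_self (μ := volume)
      (fun z => u.indicator (fun _ => (1:ℝ≥0∞)) z * g₂ (z - x)) x)
  simp_rw [← hg₁, ← hg₂, hinner]
  rw [lintegral_withDensity_eq_lintegral_mul _ hmeas₁]
  swap
  · exact (((measurable_const.indicator hu).comp measurable_snd).mul
      (hmeas₂.comp (measurable_snd.sub measurable_fst))).lintegral_prod_right'
  -- now swap the integrals
  have hswap : ∫⁻ x, (g₁ * fun x => ∫⁻ z, u.indicator (fun _ => (1:ℝ≥0∞)) z * g₂ (z - x)) x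
      = ∫⁻ x, ∫⁻ z, g₁ x * (u.indicator (fun _ => (1:ℝ≥0∞)) z * g₂ (z - x)) := by
    congr 1; ext x
    simp only [Pi.mul_apply]
    have hF : Measurable (fun z : ℝ => u.indicator (fun _ => (1:ℝ≥0∞)) z * g₂ (z - x)) := by
      apply Measurable.mul
      · exact measurable_const.indicator hu
      · exact hmeas₂.comp (measurable_id.sub_const x)
    rw [← lintegral_const_mul _ hF]
  rw [hswap, lintegral_lintegral_swap]
  swap
  · apply Measurable.aemeasurable
    exact (hmeas₁.comp measurable_fst).mul
      (((measurable_const.indicator hu).comp measurable_snd).mul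
        (hmeas₂.comp (measurable_snd.sub measurable_fst)))
  have hpoint : ∀ z : ℝ, ∫⁻ x, g₁ x * (u.indicator (fun _ => (1:ℝ≥0∞)) z * g₂ (z - x))
      = u.indicator (fun _ => (1:ℝ≥0∞)) z * gaussianPDF (m₁ + m₂) (v₁ + v₂) z := by
    intro z
    have h2 : ∀ x : ℝ, g₁ x * (u.indicator (fun _ => (1:ℝ≥0∞)) z * g₂ (z - x))
        = u.indicator (fun _ => (1:ℝ≥0∞)) z * (g₁ x * g₂ (z - x)) := fun x => by ring
    simp_rw [h2]
    have hG : Measurable (fun x : ℝ => g₁ x * g₂ (z - x)) := by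
      apply Measurable.mul (f := g₁) (g := fun x => g₂ (z - x))
      · exact hmeas₁
      · exact hmeas₂.comp (measurable_const.sub measurable_id)
    rw [lintegral_const_mul _ hG]
    congr 1
    have h3 : ∀ x : ℝ, g₁ x * g₂ (z - x)
        = gaussianPDF (m₁ + m₂) (v₁ + v₂) z
          * gaussianPDF (((v₂ : ℝ) * m₁ + (v₁ : ℝ) * (z - m₂)) / ((v₁ : ℝ) + v₂))
              (v₁ * v₂ / (v₁ + v₂)) x := by
      intro x
      rw [hg₁, hg₂, gaussianPDF, gaussianPDF, gaussianPDF, gaussianPDF,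
        ← ENNReal.ofReal_mul (gaussianPDFReal_nonneg _ _ _),
        ← ENNReal.ofReal_mul (gaussianPDFReal_nonneg _ _ _),
        pdf_mul m₁ m₂ v₁ v₂ hv₁ hv₂ z x]
    simp_rw [h3]
    rw [lintegral_const_mul _ (measurable_gaussianPDF _ _),
      lintegral_gaussianPDF_eq_one _ hw, mul_one]
  simp_rw [hpoint]
  rw [← lintegral_indicator hu]
  congr 1
  ext z
  by_cases hz : z ∈ u
  · simp [Set.indicator_of_mem hz]
  · simp [Set.indicator_of_notMem hz]

end GLGAux

/-- Marginal laws of the hidden states in the GLG tree model: each hidden state `s i`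
is Gaussian `N(m i, t i)`, where `m` and `t` satisfy the recursions
`m 0 = μ₀`, `t 0 = σ₀²`, `m i = α (ρ i) + β (ρ i) m (ρ i)` and
`t i = κ (ρ i)² + β (ρ i)² t (ρ i)` for `i ≠ 0`. -/
theorem glg_hidden_state_marginal_law (n : ℕ) [NeZero n]
    (ρ : Fin n → Fin n) (hρ0 : ρ 0 = 0) (hρ : ∀ i : Fin n, i ≠ 0 → ρ i < i)
    (μ₀ : ℝ) (σ₀ : ℝ≥0) (hσ₀ : 0 < σ₀)
    (α β : Fin n → ℝ) (κ : Fin n → ℝ≥0) (hκ : ∀ i, 0 < κ i)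
    {Ω : Type*} [MeasurableSpace Ω] (P : Measure Ω) [IsProbabilityMeasure P]
    (v : Fin n → Ω → ℝ) (hvmeas : ∀ i, Measurable (v i))
    (hindep : iIndepFun v P)
    (hv0 : P.map (v 0) = gaussianReal μ₀ (σ₀ ^ 2))
    (hvi : ∀ i : Fin n, i ≠ 0 →
      P.map (v i) = gaussianReal (α (ρ i)) (κ (ρ i) ^ 2))
    (s : Fin n → Ω → ℝ)
    (hs0 : s 0 = v 0)
    (hsi : ∀ i : Fin n, i ≠ 0 → s i = fun ω => β (ρ i) * s (ρ i) ω + v i ω)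
    (m : Fin n → ℝ) (t : Fin n → ℝ≥0)
    (hm0 : m 0 = μ₀) (ht0 : t 0 = σ₀ ^ 2)
    (hmi : ∀ i : Fin n, i ≠ 0 → m i = α (ρ i) + β (ρ i) * m (ρ i))
    (hti : ∀ i : Fin n, i ≠ 0 →
      (t i : ℝ) = (κ (ρ i) : ℝ) ^ 2 + β (ρ i) ^ 2 * (t (ρ i) : ℝ)) :
    ∀ i : Fin n, P.map (s i) = gaussianReal (m i) (t i) := by
  -- representation of s i as a measurable function of (v j)_{j ≤ i}
  have hrep : ∀ (k : ℕ) (i : Fin n), i.val ≤ k →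
      ∃ φ : ((↥(Finset.Iic i)) → ℝ) → ℝ,
        Measurable φ ∧ s i = fun ω => φ (fun j => v j.1 ω) := by
    intro k
    induction k with
    | zero =>
      intro i hi
      have hi0 : i = 0 := by
        ext; simpa using hi
      subst hi0
      refine ⟨fun g => g ⟨0, Finset.mem_Iic.mpr le_rfl⟩, measurable_pi_apply _, ?_⟩
      rw [hs0]
    | succ k ih =>
      intro i hi
      by_cases hi0 : i = 0
      · subst hi0
        refine ⟨fun g => g ⟨0, Finset.mem_Iic.mpr le_rfl⟩, measurable_pi_apply _, ?_⟩
        rw [hs0]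
      · have hp : ρ i < i := hρ i hi0
        have hpk : (ρ i).val ≤ k := by
          have := Fin.lt_iff_val_lt_val.mp hp
          omega
        obtain ⟨φp, hφpm, hφpe⟩ := ih (ρ i) hpk
        have hsub : ∀ j : Fin n, j ∈ Finset.Iic (ρ i) → j ∈ Finset.Iic i := by
          intro j hj
          rw [Finset.mem_Iic] at *
          exact le_trans hj (le_of_lt hp)
        refine ⟨fun g => β (ρ i) * φp (fun j => g ⟨j.1, hsub j.1 j.2⟩)
            + g ⟨i, Finset.mem_Iic.mpr le_rfl⟩, ?_, ?_⟩
        · exact ((hφpm.comp (measurable_pi_lambda _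
            (fun j => measurable_pi_apply _))).const_mul _).add (measurable_pi_apply _)
        · rw [hsi i hi0, hφpe]
  have hmeas : ∀ i : Fin n, Measurable (s i) := by
    intro i
    obtain ⟨φ, hφm, hφe⟩ := hrep i.val i le_rfl
    rw [hφe]
    exact hφm.comp (measurable_pi_lambda _ (fun j => hvmeas j.1))
  -- independence of s (ρ i) and v i
  have hindepS : ∀ i : Fin n, i ≠ 0 → IndepFun (s (ρ i)) (v i) P := by
    intro i hi0
    have hp : ρ i < i := hρ i hi0
    obtain ⟨φ, hφm, hφe⟩ := hrep (ρ i).val (ρ i) le_rfl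
    have hST : Disjoint (Finset.Iic (ρ i)) ({i} : Finset (Fin n)) := by
      rw [Finset.disjoint_singleton_right, Finset.mem_Iic]
      exact not_le.mpr hp
    have h := hindep.indepFun_finset (Finset.Iic (ρ i)) {i} hST hvmeas
    have h2 := h.comp hφm
      (measurable_pi_apply (⟨i, Finset.mem_singleton_self i⟩ :
        (({i} : Finset (Fin n)) : Finset (Fin n))))
    have e1 : (φ ∘ fun a (j : (Finset.Iic (ρ i) : Finset (Fin n))) => v j.1 a) = s (ρ i) := by
      rw [hφe]; rfl
    have e2 : ((fun g : (({i} : Finset (Fin n)) : Finset (Fin n)) → ℝ =>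
        g ⟨i, Finset.mem_singleton_self i⟩) ∘ fun a (j : (({i} : Finset (Fin n)) :
          Finset (Fin n))) => v j.1 a) = v i := rfl
    rwa [e1, e2] at h2
  -- main strong induction
  have main : ∀ (k : ℕ) (i : Fin n), i.val ≤ k → P.map (s i) = gaussianReal (m i) (t i) := by
    intro k
    induction k with
    | zero =>
      intro i hi
      have hi0 : i = 0 := by ext; simpa using hi
      subst hi0
      rw [hs0, hv0, hm0, ht0]
    | succ k ih =>
      intro i hi
      by_cases hi0 : i = 0
      · subst hi0; rw [hs0, hv0, hm0, ht0]
      · have hp : ρ i < i := hρ i hi0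
        have hpk : (ρ i).val ≤ k := by
          have := Fin.lt_iff_val_lt_val.mp hp
          omega
        have IH := ih (ρ i) hpk
        set c := β (ρ i) with hc
        have hXm : Measurable (fun ω => c * s (ρ i) ω) := (hmeas (ρ i)).const_mul c
        have hXlaw : P.map (fun ω => c * s (ρ i) ω)
            = gaussianReal (c * m (ρ i)) (NNReal.mk (c ^ 2) (sq_nonneg _) * t (ρ i)) := by
          have : (fun ω => c * s (ρ i) ω) = (c * ·) ∘ s (ρ i) := rfl
          rw [this, ← Measure.map_map (measurable_const_mul c) (hmeas (ρ i)), IH,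
            gaussianReal_map_const_mul]
        have hindepX : IndepFun (fun ω => c * s (ρ i) ω) (v i) P := by
          have := (hindepS i hi0).comp (measurable_const_mul c) measurable_id
          exact this
        rw [hsi i hi0]
        have hcomp : (fun ω => c * s (ρ i) ω + v i ω)
            = (fun q : ℝ × ℝ => q.1 + q.2) ∘ (fun ω => (c * s (ρ i) ω, v i ω)) := rfl
        rw [hcomp, ← Measure.map_map measurable_add (hXm.prodMk (hvmeas i)),
          (indepFun_iff_map_prod_eq_prod_map_map hXm.aemeasurable
            (hvmeas i).aemeasurable).mp hindepX,
          hXlaw, hvi i hi0,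
          GLGAux.map_add_prod_gaussian _ _ _ _ (pow_ne_zero 2 (hκ (ρ i)).ne')]
        congr 1
        · rw [hmi i hi0]; ring
        · apply NNReal.coe_injective
          rw [hti i hi0]
          push_cast
          simp only [hc]
          ring
  intro i
  exact main i.val i le_rfl
end

section
/- Consider the GLG tree construction of hidden states s₁,…,sₙ, and let Σ be the n×n covariance matrix Σ_{ij} = Cov(sᵢ, sⱼ). Define the n×n matrix Δ by: Δ_{ii} = 1/κ²_{ρ(i)} + |c(i)|·βᵢ²/κᵢ² if node i has children, Δ_{ii} = 1/κ²_{ρ(i)} if i is a leaf, Δ_{ij} = −βᵢ/κᵢ² if i = ρ(j), Δ_{ij} = −βⱼ/κⱼ² if j = ρ(i), and Δ_{ij} = 0 otherwise, where c(i) is the set of children of i, |c(i)| its cardinality, and κ₀ = σ₀. Then Δ is the precision matrix of the Gaussian vector (s₁,…,sₙ): Σ · Δ = I (the n×n identity matrix). -/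
open MeasureTheory ProbabilityTheory Real
open scoped NNReal Classical

open scoped ENNReal


lemma glg_odd {b : ℝ} : ∫ x : ℝ, x * exp (-b * x^2) = 0 := by
  have h := (Measure.measurePreserving_neg (volume : Measure ℝ)).integral_comp
      (Homeomorph.neg ℝ).measurableEmbedding (fun y : ℝ => y * exp (-b * y^2))
  simp only [neg_sq, neg_mul, integral_neg] at h
  simp only [neg_mul]
  linarith

lemma glg_sq_int {b : ℝ} (hb : 0 < b) :
    ∫ x : ℝ, x^2 * exp (-b * x^2) = b⁻¹ / 2 * √(π / b) := by
  have h2 : ∀ x : ℝ, x ^ (2:ℝ) = x ^ 2 := fun x => by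
    rw [show (2:ℝ) = ((2:ℕ):ℝ) by norm_num, Real.rpow_natCast]
  have habs := integral_comp_abs (f := fun t : ℝ => t^2 * exp (-b * t^2))
  simp only [sq_abs] at habs
  rw [habs]
  have hrw : ∫ x in Set.Ioi (0:ℝ), x^2 * exp (-b * x^2)
      = ∫ x in Set.Ioi (0:ℝ), x ^ (2:ℝ) * exp (-b * x ^ (2:ℝ)) := by
    refine setIntegral_congr_fun measurableSet_Ioi (fun x _ => ?_)
    rw [h2]
  rw [hrw, integral_rpow_mul_exp_neg_mul_rpow two_pos (by norm_num) hb]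
  have hG : Real.Gamma (((2:ℝ)+1)/2) = (1/2) * √π := by
    rw [show ((2:ℝ)+1)/2 = 1/2 + 1 by norm_num,
      Real.Gamma_add_one (by norm_num), Real.Gamma_one_half_eq]
  rw [hG]
  have hb32 : b ^ (-((2:ℝ)+1)/2) = b⁻¹ * (√b)⁻¹ := by
    rw [show (-((2:ℝ)+1)/2) = (-1 : ℝ) + (-(1/2) : ℝ) by norm_num,
      Real.rpow_add hb, Real.rpow_neg_one, Real.rpow_neg hb.le, sqrt_eq_rpow]
  rw [hb32, sqrt_div' π hb.le]
  have hsb : √b ≠ 0 := by positivity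
  field_simp


lemma glg_pdf_eq (m : ℝ) (V : ℝ≥0) :
    gaussianPDF m V = fun x => ((gaussianPDFReal m V x).toNNReal : ℝ≥0∞) := by
  funext x; rw [gaussianPDF_def]; rfl

lemma glg_gauss_integral (m : ℝ) {V : ℝ≥0} (hV : V ≠ 0) (g : ℝ → ℝ) :
    ∫ y, g y ∂(gaussianReal m V) = ∫ x, gaussianPDFReal m V x * g x := by
  rw [gaussianReal_of_var_ne_zero m hV, glg_pdf_eq,
    integral_withDensity_eq_integral_smul (measurable_gaussianPDFReal m V).real_toNNReal g]
  congr 1 with x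
  rw [NNReal.smul_def, smul_eq_mul, Real.coe_toNNReal _ (gaussianPDFReal_nonneg m V x)]

lemma glg_gauss_integrable (m : ℝ) {V : ℝ≥0} (hV : V ≠ 0) {g : ℝ → ℝ}
    (h : Integrable (fun x => gaussianPDFReal m V x * g x) volume) :
    Integrable g (gaussianReal m V) := by
  rw [gaussianReal_of_var_ne_zero m hV, glg_pdf_eq,
    integrable_withDensity_iff_integrable_smul (measurable_gaussianPDFReal m V).real_toNNReal]
  refine h.congr (Filter.Eventually.of_forall fun x => ?_)
  simp only []
  rw [NNReal.smul_def, smul_eq_mul, Real.coe_toNNReal _ (gaussianPDFReal_nonneg m V x)]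

section moments

variable (m : ℝ)

lemma glg_pdf_shift (V : ℝ≥0) (x : ℝ) :
    gaussianPDFReal m V x
      = (√(2 * π * V))⁻¹ * exp (-(2 * (V:ℝ))⁻¹ * (x - m)^2) := by
  simp only [gaussianPDFReal]
  congr 1
  rw [neg_div, div_eq_inv_mul, ← neg_mul]

lemma glg_Vpos {V : ℝ≥0} (hV : V ≠ 0) : (0:ℝ) < V := by
  exact_mod_cast pos_iff_ne_zero.2 hV

lemma glg_norm_const {V : ℝ≥0} (hV : V ≠ 0) : (√(2 * π * (V:ℝ)))⁻¹ * √(π / (2 * (V:ℝ))⁻¹) = 1 := by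
  have hVr : (0:ℝ) < V := glg_Vpos hV
  rw [show π / (2 * (V:ℝ))⁻¹ = 2 * π * V by field_simp]
  exact inv_mul_cancel₀ (by positivity)

lemma glg_gauss_mean {V : ℝ≥0} (hV : V ≠ 0) : ∫ x, x ∂(gaussianReal m V) = m := by
  have hVr : (0:ℝ) < V := glg_Vpos hV
  have hb : (0:ℝ) < (2 * (V:ℝ))⁻¹ := by positivity
  set b : ℝ := (2 * (V:ℝ))⁻¹ with hbdef
  set c : ℝ := (√(2 * π * (V:ℝ)))⁻¹ with hcdef
  rw [glg_gauss_integral m hV _]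
  have key : (fun x => gaussianPDFReal m V x * x)
      = fun x => (fun y => c * (y * exp (-b * y^2)) + (c * m) * exp (-b * y^2)) (x - m) := by
    funext x
    rw [glg_pdf_shift]
    ring
  have IA : Integrable (fun y : ℝ => c * (y * exp (-b * y^2))) volume :=
    (integrable_mul_exp_neg_mul_sq hb).const_mul c
  have IB : Integrable (fun y : ℝ => (c * m) * exp (-b * y^2)) volume :=
    (integrable_exp_neg_mul_sq hb).const_mul (c * m)
  rw [key, integral_sub_right_eq_self (μ := volume)
      (fun y => c * (y * exp (-b * y^2)) + (c * m) * exp (-b * y^2)) m,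
    integral_add IA IB, integral_const_mul, integral_const_mul, glg_odd, integral_gaussian]
  have hnorm : c * √(π / b) = 1 := glg_norm_const (V := V) hV
  calc c * 0 + c * m * √(π / b) = m * (c * √(π / b)) := by ring
    _ = m := by rw [hnorm, mul_one]

lemma glg_pdf_sq_integrable {V : ℝ≥0} (hV : V ≠ 0) :
    Integrable (fun x => gaussianPDFReal m V x * x ^ 2) volume := by
  have hVr : (0:ℝ) < V := glg_Vpos hV
  have hb : (0:ℝ) < (2 * (V:ℝ))⁻¹ := by positivity
  set b : ℝ := (2 * (V:ℝ))⁻¹ with hbdef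
  set c : ℝ := (√(2 * π * (V:ℝ)))⁻¹ with hcdef
  have h2 : ∀ x : ℝ, x ^ (2:ℝ) = x ^ 2 := fun x => by
    rw [show (2:ℝ) = ((2:ℕ):ℝ) by norm_num, Real.rpow_natCast]
  have hI2 : Integrable (fun y : ℝ => y^2 * exp (-b * y^2)) volume := by
    have := integrable_rpow_mul_exp_neg_mul_sq hb (s := 2) (by norm_num)
    refine this.congr (Filter.Eventually.of_forall fun x => ?_)
    simp only []
    rw [h2]
  have key : (fun x => gaussianPDFReal m V x * x ^ 2)
      = fun x => (fun y => c * (y^2 * exp (-b * y^2)) + (2 * c * m) * (y * exp (-b * y^2))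
          + (c * m^2) * exp (-b * y^2)) (x - m) := by
    funext x
    rw [glg_pdf_shift]
    ring
  rw [key]
  exact (((hI2.const_mul c).add ((integrable_mul_exp_neg_mul_sq hb).const_mul (2*c*m))).add
    ((integrable_exp_neg_mul_sq hb).const_mul (c * m^2))).comp_sub_right m

lemma glg_gauss_sq {V : ℝ≥0} (hV : V ≠ 0) : ∫ x, x^2 ∂(gaussianReal m V) = (V:ℝ) + m^2 := by
  have hVr : (0:ℝ) < V := glg_Vpos hV
  have hb : (0:ℝ) < (2 * (V:ℝ))⁻¹ := by positivity
  set b : ℝ := (2 * (V:ℝ))⁻¹ with hbdef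
  set c : ℝ := (√(2 * π * (V:ℝ)))⁻¹ with hcdef
  have h2 : ∀ x : ℝ, x ^ (2:ℝ) = x ^ 2 := fun x => by
    rw [show (2:ℝ) = ((2:ℕ):ℝ) by norm_num, Real.rpow_natCast]
  have hI2 : Integrable (fun y : ℝ => y^2 * exp (-b * y^2)) volume := by
    have := integrable_rpow_mul_exp_neg_mul_sq hb (s := 2) (by norm_num)
    refine this.congr (Filter.Eventually.of_forall fun x => ?_)
    simp only []
    rw [h2]
  rw [glg_gauss_integral m hV _]
  have key : (fun x => gaussianPDFReal m V x * x ^ 2)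
      = fun x => (fun y => c * (y^2 * exp (-b * y^2)) + (2 * c * m) * (y * exp (-b * y^2))
          + (c * m^2) * exp (-b * y^2)) (x - m) := by
    funext x
    rw [glg_pdf_shift]
    ring
  have IA : Integrable (fun y : ℝ => c * (y^2 * exp (-b * y^2))) volume := hI2.const_mul c
  have IB : Integrable (fun y : ℝ => (2 * c * m) * (y * exp (-b * y^2))) volume :=
    (integrable_mul_exp_neg_mul_sq hb).const_mul (2*c*m)
  have IC : Integrable (fun y : ℝ => (c * m^2) * exp (-b * y^2)) volume :=
    (integrable_exp_neg_mul_sq hb).const_mul (c * m^2)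
  have IAB : Integrable (fun y : ℝ => c * (y^2 * exp (-b * y^2))
      + (2 * c * m) * (y * exp (-b * y^2))) volume := IA.add IB
  rw [key, integral_sub_right_eq_self (μ := volume)
      (fun y => c * (y^2 * exp (-b * y^2)) + (2 * c * m) * (y * exp (-b * y^2))
        + (c * m^2) * exp (-b * y^2)) m,
    integral_add IAB IC, integral_add IA IB,
    integral_const_mul, integral_const_mul, integral_const_mul,
    glg_odd, glg_sq_int hb, integral_gaussian]
  have hnorm : c * √(π/b) = 1 := glg_norm_const (V := V) hV
  have hbinv : b⁻¹ = 2 * (V:ℝ) := by rw [hbdef, inv_inv]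
  calc c * (b⁻¹ / 2 * √(π / b)) + 2 * c * m * 0 + c * m ^ 2 * √(π / b)
      = (c * √(π/b)) * (b⁻¹/2) + (c * √(π/b)) * m^2 := by ring
    _ = (V:ℝ) + m^2 := by rw [hnorm, hbinv]; ring

end moments


section glue
variable {Ω : Type*} [MeasurableSpace Ω] {P : Measure Ω}

lemma glg_int_mul [IsFiniteMeasure P] {f g : Ω → ℝ}
    (hf : MemLp f 2 P) (hg : MemLp g 2 P) :
    Integrable (fun ω => f ω * g ω) P := by
  have hf2 : Integrable (fun ω => f ω ^ 2) P :=
    (memLp_two_iff_integrable_sq hf.aestronglyMeasurable).1 hf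
  have hg2 : Integrable (fun ω => g ω ^ 2) P :=
    (memLp_two_iff_integrable_sq hg.aestronglyMeasurable).1 hg
  have hmaj : Integrable (fun ω => (f ω ^ 2 + g ω ^ 2) / 2) P := (hf2.add hg2).div_const 2
  refine hmaj.mono' (hf.aestronglyMeasurable.mul hg.aestronglyMeasurable)
    (Filter.Eventually.of_forall fun ω => ?_)
  have h1 := two_mul_le_add_sq |f ω| |g ω|
  have h2 : ‖f ω * g ω‖ = |f ω| * |g ω| := by rw [Real.norm_eq_abs, abs_mul]
  rw [h2]
  nlinarith [sq_abs (f ω), sq_abs (g ω)]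

lemma glg_memL2 {X : Ω → ℝ} (hX : Measurable X) (m : ℝ) {V : ℝ≥0} (hV : V ≠ 0)
    (hmap : P.map X = gaussianReal m V) : MemLp X 2 P := by
  have h1 : MemLp (id : ℝ → ℝ) 2 (P.map X) := by
    rw [hmap]
    refine (memLp_two_iff_integrable_sq aestronglyMeasurable_id).2 ?_
    exact glg_gauss_integrable m hV (glg_pdf_sq_integrable m hV)
  have h2 := (memLp_map_measure_iff aestronglyMeasurable_id hX.aemeasurable).1 h1
  simpa [Function.comp] using h2

lemma glg_mean [IsProbabilityMeasure P] {X : Ω → ℝ} (hX : Measurable X) (m : ℝ) {V : ℝ≥0}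
    (hV : V ≠ 0) (hmap : P.map X = gaussianReal m V) : ∫ ω, X ω ∂P = m := by
  have h := integral_map (μ := P) hX.aemeasurable
    (f := fun y : ℝ => y) aestronglyMeasurable_id
  rw [hmap] at h
  rw [← h, glg_gauss_mean m hV]

lemma glg_moment2 [IsProbabilityMeasure P] {X : Ω → ℝ} (hX : Measurable X) (m : ℝ) {V : ℝ≥0}
    (hV : V ≠ 0) (hmap : P.map X = gaussianReal m V) :
    ∫ ω, X ω ^ 2 ∂P = (V : ℝ) + m ^ 2 := by
  have h := integral_map (μ := P) hX.aemeasurable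
    (f := fun y : ℝ => y ^ 2) ((measurable_id.pow_const 2).aestronglyMeasurable)
  rw [hmap] at h
  rw [← h, glg_gauss_sq m hV]

end glue

lemma glg_sum_expand {n : ℕ} (Mi Mj a : Fin n → ℝ) (S : Fin n → Fin n → ℝ) :
    ∑ l, (∑ k, Mi k * (S k l - a k * a l)) * Mj l
      = (∑ k, ∑ l, Mi k * Mj l * S k l) - (∑ k, Mi k * a k) * (∑ l, Mj l * a l) := by
  have h1 : ∀ l, (∑ k, Mi k * (S k l - a k * a l)) * Mj l
      = (∑ k, Mi k * Mj l * S k l) - (∑ k, (Mi k * a k) * (Mj l * a l)) := by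
    intro l
    rw [← Finset.sum_sub_distrib, Finset.sum_mul]
    exact Finset.sum_congr rfl fun k _ => by ring
  rw [Finset.sum_congr rfl fun l _ => h1 l, Finset.sum_sub_distrib, Finset.sum_mul_sum]
  congr 1
  · rw [Finset.sum_comm]
  · rw [Finset.sum_comm]

/-- The precision matrix of the hidden states in the GLG tree model: the covariance
matrix `Σ` of `(s₁,…,sₙ)` satisfies `Σ Δ = I`, where `Δᵢᵢ = 1/κ²_{ρ(i)} +
|c(i)| βᵢ²/κᵢ²` if `i` has children, `Δᵢᵢ = 1/κ²_{ρ(i)}` if `i` is a leaf,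
`Δᵢⱼ = -βᵢ/κᵢ²` if `i = ρ(j)`, `Δᵢⱼ = -βⱼ/κⱼ²` if `j = ρ(i)`, and `Δᵢⱼ = 0`
otherwise (with `κ` at the virtual parent of the root equal to `σ₀`). -/
theorem glg_precision_matrix (n : ℕ) [NeZero n]
    (ρ : Fin n → Fin n) (hρ0 : ρ 0 = 0) (hρ : ∀ i : Fin n, i ≠ 0 → ρ i < i)
    (μ₀ : ℝ) (σ₀ : ℝ≥0) (hσ₀ : 0 < σ₀)
    (α β : Fin n → ℝ) (κ : Fin n → ℝ≥0) (hκ : ∀ i, 0 < κ i)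
    {Ω : Type*} [MeasurableSpace Ω] (P : Measure Ω) [IsProbabilityMeasure P]
    (v : Fin n → Ω → ℝ) (hvmeas : ∀ i, Measurable (v i))
    (hindep : iIndepFun v P)
    (hv0 : P.map (v 0) = gaussianReal μ₀ (σ₀ ^ 2))
    (hvi : ∀ i : Fin n, i ≠ 0 →
      P.map (v i) = gaussianReal (α (ρ i)) (κ (ρ i) ^ 2))
    (s : Fin n → Ω → ℝ)
    (hs0 : s 0 = v 0)
    (hsi : ∀ i : Fin n, i ≠ 0 → s i = fun ω => β (ρ i) * s (ρ i) ω + v i ω)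
    (Smat Δ : Matrix (Fin n) (Fin n) ℝ)
    (hS : Smat = fun i j =>
      (∫ ω, s i ω * s j ω ∂P) - (∫ ω, s i ω ∂P) * (∫ ω, s j ω ∂P))
    (hΔ : Δ = fun i j =>
      if i = j then
        (if ∃ t : Fin n, t ≠ 0 ∧ ρ t = i then
          1 / (if i = 0 then (σ₀ : ℝ) else (κ (ρ i) : ℝ)) ^ 2 +
            ((Finset.univ.filter (fun t : Fin n => t ≠ 0 ∧ ρ t = i)).card : ℝ) *
              β i ^ 2 / (κ i : ℝ) ^ 2
        else 1 / (if i = 0 then (σ₀ : ℝ) else (κ (ρ i) : ℝ)) ^ 2)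
      else if j ≠ 0 ∧ ρ j = i then -β i / (κ i : ℝ) ^ 2
      else if i ≠ 0 ∧ ρ i = j then -β j / (κ j : ℝ) ^ 2
      else 0) :
    Smat * Δ = 1 := by
  -- gaussian parameters of each v i
  set m : Fin n → ℝ := fun i => if i = 0 then μ₀ else α (ρ i) with hmdef
  set Vr : Fin n → ℝ≥0 := fun i => if i = 0 then σ₀ ^ 2 else κ (ρ i) ^ 2 with hVdef
  have hVne : ∀ i, Vr i ≠ 0 := by
    intro i
    simp only [hVdef]
    split
    · exact pow_ne_zero _ hσ₀.ne'
    · exact pow_ne_zero _ (hκ (ρ i)).ne'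
  have hmap : ∀ i, P.map (v i) = gaussianReal (m i) (Vr i) := by
    intro i
    by_cases h : i = 0
    · subst h; simpa [hmdef, hVdef] using hv0
    · simpa [hmdef, hVdef, h] using hvi i h
  have hvL2 : ∀ i, MemLp (v i) 2 P := fun i => glg_memL2 (hvmeas i) (m i) (hVne i) (hmap i)
  have hvInt : ∀ i, Integrable (v i) P := fun i => (hvL2 i).integrable one_le_two
  have hvMean : ∀ i, ∫ ω, v i ω ∂P = m i :=
    fun i => glg_mean (hvmeas i) (m i) (hVne i) (hmap i)
  have hvSq : ∀ i, ∫ ω, v i ω ^ 2 ∂P = (Vr i : ℝ) + m i ^ 2 :=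
    fun i => glg_moment2 (hvmeas i) (m i) (hVne i) (hmap i)
  -- the diagonal variance vector
  set D : Fin n → ℝ := fun i => (if i = 0 then (σ₀ : ℝ) else (κ (ρ i) : ℝ)) ^ 2 with hDdef
  have hDV : ∀ i, (Vr i : ℝ) = D i := by
    intro i
    simp only [hVdef, hDdef]
    split <;> push_cast <;> ring
  have hDpos : ∀ i, 0 < D i := by
    intro i
    simp only [hDdef]
    split
    · have : (0:ℝ) < σ₀ := hσ₀
      positivity
    · have : (0:ℝ) < κ (ρ i) := hκ (ρ i)
      positivity
  have hDne : ∀ i, D i ≠ 0 := fun i => (hDpos i).ne'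
  -- properties of s
  have hsprop : ∀ N : ℕ, ∀ i : Fin n, (i : ℕ) < N → Measurable (s i) ∧ MemLp (s i) 2 P := by
    intro N
    induction N with
    | zero => intro i h; omega
    | succ N ih =>
      intro i hi
      by_cases h0 : i = 0
      · subst h0; rw [hs0]; exact ⟨hvmeas 0, hvL2 0⟩
      · have hlt : (ρ i : ℕ) < (i : ℕ) := hρ i h0
        have hri := ih (ρ i) (by omega)
        rw [hsi i h0]
        exact ⟨(measurable_const.mul hri.1).add (hvmeas i),
          (hri.2.const_mul _).add (hvL2 i)⟩
  have hsL2 : ∀ i, MemLp (s i) 2 P := fun i => (hsprop n i i.isLt).2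
  have hsInt : ∀ i, Integrable (s i) P := fun i => (hsL2 i).integrable one_le_two
  have hssInt : ∀ i j, Integrable (fun ω => s i ω * s j ω) P :=
    fun i j => glg_int_mul (hsL2 i) (hsL2 j)
  -- the matrix M = I - B
  set B : Matrix (Fin n) (Fin n) ℝ :=
    Matrix.of (fun i j => if i ≠ 0 ∧ j = ρ i then β (ρ i) else 0) with hBdef
  set M : Matrix (Fin n) (Fin n) ℝ := 1 - B with hMdef
  have hMapply : ∀ i j, M i j
      = (if i = j then (1:ℝ) else 0) - (if i ≠ 0 ∧ j = ρ i then β (ρ i) else 0) := by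
    intro i j
    simp [hMdef, hBdef, Matrix.sub_apply, Matrix.one_apply]
  have hMv : ∀ i ω, ∑ j, M i j * s j ω = v i ω := by
    intro i ω
    have e1 : ∑ j, (if i = j then (1:ℝ) else 0) * s j ω = s i ω := by
      rw [Finset.sum_eq_single i]
      · simp
      · intro b _ hb; simp [Ne.symm hb, (Ne.symm hb : ¬ i = b)]
      · intro h; exact absurd (Finset.mem_univ i) h
    have esum : ∑ j, M i j * s j ω
        = (∑ j, (if i = j then (1:ℝ) else 0) * s j ω)
          - ∑ j, (if i ≠ 0 ∧ j = ρ i then β (ρ i) else 0) * s j ω := by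
      rw [← Finset.sum_sub_distrib]
      exact Finset.sum_congr rfl fun j _ => by rw [hMapply, sub_mul]
    by_cases h0 : i = 0
    · have e2 : ∑ j, (if i ≠ 0 ∧ j = ρ i then β (ρ i) else 0) * s j ω = 0 := by
        refine Finset.sum_eq_zero fun j _ => ?_
        rw [if_neg, zero_mul]
        rintro ⟨hh, _⟩; exact hh h0
      rw [esum, e1, e2, sub_zero, h0, hs0]
    · have e2 : ∑ j, (if i ≠ 0 ∧ j = ρ i then β (ρ i) else 0) * s j ω
          = β (ρ i) * s (ρ i) ω := by
        rw [Finset.sum_eq_single (ρ i)]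
        · rw [if_pos ⟨h0, rfl⟩]
        · intro b _ hb; rw [if_neg, zero_mul]; rintro ⟨_, hh⟩; exact hb hh
        · intro h; exact absurd (Finset.mem_univ (ρ i)) h
      rw [esum, e1, e2]
      have := congrFun (hsi i h0) ω
      beta_reduce at this
      linarith
  -- covariance structure of v
  have hvv : ∀ i j : Fin n,
      (∫ ω, v i ω * v j ω ∂P) - (∫ ω, v i ω ∂P) * (∫ ω, v j ω ∂P)
        = if i = j then D i else 0 := by
    intro i j
    by_cases hij : i = j
    · subst hij
      rw [if_pos rfl]
      have hsq : ∫ ω, v i ω * v i ω ∂P = ∫ ω, v i ω ^ 2 ∂P := by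
        refine integral_congr_ae (Filter.Eventually.of_forall fun ω => ?_)
        ring
      rw [hsq, hvSq i, hvMean i, hDV i]
      ring
    · have h := IndepFun.integral_mul_eq_mul_integral (hindep.indepFun hij)
        (hvInt i).aestronglyMeasurable (hvInt j).aestronglyMeasurable
      have h' : ∫ ω, v i ω * v j ω ∂P = (∫ ω, v i ω ∂P) * ∫ ω, v j ω ∂P := by
        simpa [Pi.mul_apply] using h
      rw [if_neg hij, h', sub_self]
  -- key identity : M Σ Mᵀ = diag D
  have hSapp : ∀ k l, Smat k l
      = (∫ ω, s k ω * s l ω ∂P) - (∫ ω, s k ω ∂P) * (∫ ω, s l ω ∂P) := by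
    intro k l; rw [hS]
  have hviexp : ∀ i, ∫ ω, v i ω ∂P = ∑ k, M i k * ∫ ω, s k ω ∂P := by
    intro i
    calc ∫ ω, v i ω ∂P = ∫ ω, ∑ k, M i k * s k ω ∂P :=
          integral_congr_ae (Filter.Eventually.of_forall fun ω => (hMv i ω).symm)
      _ = ∑ k, ∫ ω, M i k * s k ω ∂P :=
          integral_finset_sum _ (fun k _ => (hsInt k).const_mul _)
      _ = ∑ k, M i k * ∫ ω, s k ω ∂P :=
          Finset.sum_congr rfl fun k _ => integral_const_mul _ _
  have hvvexp : ∀ i j, ∫ ω, v i ω * v j ω ∂P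
      = ∑ k, ∑ l, M i k * M j l * ∫ ω, s k ω * s l ω ∂P := by
    intro i j
    have hint : ∀ k l : Fin n,
        Integrable (fun ω => (M i k * s k ω) * (M j l * s l ω)) P := by
      intro k l
      have h := (hssInt k l).const_mul (M i k * M j l)
      refine h.congr (Filter.Eventually.of_forall fun ω => ?_)
      simp only []
      ring
    calc ∫ ω, v i ω * v j ω ∂P
        = ∫ ω, (∑ k, M i k * s k ω) * (∑ l, M j l * s l ω) ∂P := by
          refine integral_congr_ae (Filter.Eventually.of_forall fun ω => ?_)
          simp only []
          rw [hMv i ω, hMv j ω]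
      _ = ∫ ω, ∑ k, ∑ l, (M i k * s k ω) * (M j l * s l ω) ∂P := by
          refine integral_congr_ae (Filter.Eventually.of_forall fun ω => ?_)
          simp only []
          rw [Finset.sum_mul_sum]
      _ = ∑ k, ∑ l, ∫ ω, (M i k * s k ω) * (M j l * s l ω) ∂P := by
          rw [integral_finset_sum _ (fun k _ => integrable_finset_sum _ (fun l _ => hint k l))]
          exact Finset.sum_congr rfl fun k _ =>
            integral_finset_sum _ (fun l _ => hint k l)
      _ = ∑ k, ∑ l, M i k * M j l * ∫ ω, s k ω * s l ω ∂P := by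
          refine Finset.sum_congr rfl fun k _ => Finset.sum_congr rfl fun l _ => ?_
          calc ∫ ω, (M i k * s k ω) * (M j l * s l ω) ∂P
              = ∫ ω, (M i k * M j l) * (s k ω * s l ω) ∂P :=
                integral_congr_ae (Filter.Eventually.of_forall fun ω => by ring)
            _ = M i k * M j l * ∫ ω, s k ω * s l ω ∂P := integral_const_mul _ _
  have hkey : M * Smat * M.transpose = Matrix.diagonal D := by
    ext i j
    rw [Matrix.mul_apply, Matrix.diagonal_apply, ← hvv i j]
    have : ∀ l, (M * Smat) i l * M.transpose l j
        = (∑ k, M i k * ((∫ ω, s k ω * s l ω ∂P)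
            - (∫ ω, s k ω ∂P) * (∫ ω, s l ω ∂P))) * M j l := by
      intro l
      rw [Matrix.mul_apply, Matrix.transpose_apply]
      congr 1
      exact Finset.sum_congr rfl fun k _ => by rw [hSapp]
    rw [Finset.sum_congr rfl fun l _ => this l,
      glg_sum_expand (fun k => M i k) (fun l => M j l) (fun k => ∫ ω, s k ω ∂P)
        (fun k l => ∫ ω, s k ω * s l ω ∂P),
      ← hvvexp i j, ← hviexp i, ← hviexp j]
  -- M is invertible
  have hdet : M.det = 1 := by
    have htri : M.BlockTriangular OrderDual.toDual := by
      intro i j hij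
      have hij' : i < j := hij
      rw [hMapply, if_neg (ne_of_lt hij'), if_neg, sub_zero]
      rintro ⟨h0, hj⟩
      exact lt_asymm hij' (hj ▸ hρ i h0)
    rw [Matrix.det_of_lowerTriangular M htri]
    refine Finset.prod_eq_one fun i _ => ?_
    rw [hMapply, if_pos rfl, if_neg, sub_zero]
    rintro ⟨h0, hi⟩
    exact absurd (hρ i h0) (by rw [← hi]; exact lt_irrefl i)
  have hMunit : IsUnit M.det := by rw [hdet]; exact isUnit_one
  -- Δ = Mᵀ D⁻¹ M
  set Dinv : Matrix (Fin n) (Fin n) ℝ := Matrix.diagonal (fun i => (D i)⁻¹) with hDinvdef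
  have hρne : ∀ k : Fin n, k ≠ 0 → ρ k ≠ k := fun k hk => ne_of_lt (hρ k hk)
  have hΔeq : Δ = M.transpose * Dinv * M := by
    ext i j
    have hentry : (M.transpose * Dinv * M) i j = ∑ k, M k i * (D k)⁻¹ * M k j := by
      rw [Matrix.mul_apply]
      refine Finset.sum_congr rfl fun k _ => ?_
      rw [hDinvdef, Matrix.mul_diagonal, Matrix.transpose_apply]
    rw [hentry]
    have hterm : ∀ k, M k i * (D k)⁻¹ * M k j
        = (if k = i then (1:ℝ) else 0) * (D k)⁻¹ * (if k = j then 1 else 0)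
          - (if k = i then (1:ℝ) else 0) * (D k)⁻¹ * (if k ≠ 0 ∧ ρ k = j then β j else 0)
          - (if k ≠ 0 ∧ ρ k = i then β i else 0) * (D k)⁻¹ * (if k = j then 1 else 0)
          + (if k ≠ 0 ∧ ρ k = i then β i else 0) * (D k)⁻¹
              * (if k ≠ 0 ∧ ρ k = j then β j else 0) := by
      intro k
      have e1 : (if k ≠ 0 ∧ i = ρ k then β (ρ k) else 0)
          = (if k ≠ 0 ∧ ρ k = i then β i else 0) := by
        by_cases h : k ≠ 0 ∧ i = ρ k
        · rw [if_pos h, if_pos ⟨h.1, h.2.symm⟩, ← h.2]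
        · rw [if_neg h, if_neg]
          rintro ⟨h0, hk⟩; exact h ⟨h0, hk.symm⟩
      have e2 : (if k ≠ 0 ∧ j = ρ k then β (ρ k) else 0)
          = (if k ≠ 0 ∧ ρ k = j then β j else 0) := by
        by_cases h : k ≠ 0 ∧ j = ρ k
        · rw [if_pos h, if_pos ⟨h.1, h.2.symm⟩, ← h.2]
        · rw [if_neg h, if_neg]
          rintro ⟨h0, hk⟩; exact h ⟨h0, hk.symm⟩
      rw [hMapply k i, hMapply k j, e1, e2]
      ring
    rw [Finset.sum_congr rfl fun k _ => hterm k]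
    rw [Finset.sum_add_distrib, Finset.sum_sub_distrib, Finset.sum_sub_distrib]
    have hT1 : ∑ k, (if k = i then (1:ℝ) else 0) * (D k)⁻¹ * (if k = j then 1 else 0)
        = if i = j then (D i)⁻¹ else 0 := by
      rw [Finset.sum_eq_single i (fun b _ hb => by simp [hb])
        (fun h => absurd (Finset.mem_univ i) h)]
      by_cases h : i = j <;> simp [h]
    have hT2 : ∑ k, (if k = i then (1:ℝ) else 0) * (D k)⁻¹
          * (if k ≠ 0 ∧ ρ k = j then β j else 0)
        = if i ≠ 0 ∧ ρ i = j then (D i)⁻¹ * β j else 0 := by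
      rw [Finset.sum_eq_single i (fun b _ hb => by simp [hb])
        (fun h => absurd (Finset.mem_univ i) h)]
      by_cases h : i ≠ 0 ∧ ρ i = j <;> simp [h]
    have hT3 : ∑ k, (if k ≠ 0 ∧ ρ k = i then β i else 0) * (D k)⁻¹
          * (if k = j then 1 else 0)
        = if j ≠ 0 ∧ ρ j = i then β i * (D j)⁻¹ else 0 := by
      rw [Finset.sum_eq_single j (fun b _ hb => by simp [hb])
        (fun h => absurd (Finset.mem_univ j) h)]
      by_cases h : j ≠ 0 ∧ ρ j = i <;> simp [h]
    have hT4 : ∑ k, (if k ≠ 0 ∧ ρ k = i then β i else 0) * (D k)⁻¹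
          * (if k ≠ 0 ∧ ρ k = j then β j else 0)
        = if i = j
            then ((Finset.univ.filter (fun t : Fin n => t ≠ 0 ∧ ρ t = i)).card : ℝ)
              * (β i ^ 2 * ((κ i : ℝ) ^ 2)⁻¹)
            else 0 := by
      by_cases hij : i = j
      · subst hij
        rw [if_pos rfl]
        have hterm4 : ∀ k, (if k ≠ 0 ∧ ρ k = i then β i else 0) * (D k)⁻¹
              * (if k ≠ 0 ∧ ρ k = i then β i else 0)
            = if k ≠ 0 ∧ ρ k = i then β i ^ 2 * ((κ i : ℝ) ^ 2)⁻¹ else 0 := by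
          intro k
          by_cases h : k ≠ 0 ∧ ρ k = i
          · have hDk : D k = (κ i : ℝ) ^ 2 := by
              simp only [hDdef]
              rw [if_neg h.1, h.2]
            simp only [if_pos h, hDk]
            ring
          · simp [h]
        rw [Finset.sum_congr rfl fun k _ => hterm4 k, ← Finset.sum_filter,
          Finset.sum_const, nsmul_eq_mul]
      · rw [if_neg hij]
        refine Finset.sum_eq_zero fun k _ => ?_
        by_cases h1 : k ≠ 0 ∧ ρ k = i
        · have h2 : ¬ (k ≠ 0 ∧ ρ k = j) := by
            rintro ⟨_, h2⟩
            exact hij (h1.2 ▸ h2 ▸ rfl)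
          simp [h2]
        · simp [h1]
    rw [hT1, hT2, hT3, hT4, hΔ]
    simp only []
    by_cases hij : i = j
    · subst hij
      have hni : ¬ (i ≠ 0 ∧ ρ i = i) := by rintro ⟨h0, hi⟩; exact hρne i h0 hi
      simp only [eq_self_iff_true, if_true, if_neg hni]
      by_cases hex : ∃ t : Fin n, t ≠ 0 ∧ ρ t = i
      · rw [if_pos hex]
        simp only [hDdef, eq_self_iff_true, if_true]
        ring
      · rw [if_neg hex]
        have hcard : (Finset.univ.filter (fun t : Fin n => t ≠ 0 ∧ ρ t = i)).card = 0 := by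
          rw [Finset.card_eq_zero, Finset.filter_eq_empty_iff]
          intro t _ ht
          exact hex ⟨t, ht⟩
        rw [hcard]
        simp only [hDdef, Nat.cast_zero, eq_self_iff_true, if_true]
        ring
    · simp only [if_neg hij]
      by_cases hc1 : j ≠ 0 ∧ ρ j = i
      · have hc2 : ¬ (i ≠ 0 ∧ ρ i = j) := by
          rintro ⟨h0, hi⟩
          exact lt_asymm (hc1.2 ▸ hρ j hc1.1) (hi ▸ hρ i h0)
        simp only [if_pos hc1, if_neg hc2]
        simp only [hDdef, if_neg hc1.1, hc1.2]
        ring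
      · simp only [if_neg hc1]
        by_cases hc2 : i ≠ 0 ∧ ρ i = j
        · simp only [if_pos hc2]
          simp only [hDdef, if_neg hc2.1, hc2.2]
          ring
        · simp only [if_neg hc2]
          ring
  -- conclusion
  have hSmatMT : Smat * M.transpose = M⁻¹ * Matrix.diagonal D := by
    have h1 : M⁻¹ * (M * Smat * M.transpose) = M⁻¹ * Matrix.diagonal D := by rw [hkey]
    rwa [Matrix.mul_assoc M Smat, ← Matrix.mul_assoc M⁻¹,
      Matrix.nonsing_inv_mul M hMunit, Matrix.one_mul] at h1
  have hDD : Matrix.diagonal D * Dinv = 1 := by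
    rw [hDinvdef, Matrix.diagonal_mul_diagonal]
    have : (fun i => D i * (D i)⁻¹) = fun _ => (1:ℝ) := by
      funext i
      exact mul_inv_cancel₀ (hDne i)
    rw [this, Matrix.diagonal_one]
  calc Smat * Δ = Smat * M.transpose * Dinv * M := by
        rw [hΔeq, ← Matrix.mul_assoc, ← Matrix.mul_assoc]
    _ = M⁻¹ * (Matrix.diagonal D * Dinv) * M := by
        rw [hSmatMT, Matrix.mul_assoc M⁻¹ (Matrix.diagonal D) Dinv]
    _ = M⁻¹ * M := by rw [hDD, Matrix.mul_one]
    _ = 1 := Matrix.nonsing_inv_mul M hMunit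
end

section
/- Consider the two-level GLG model: let s_h ~ N(μ_ρ, σ_ρ²) with σ_ρ > 0, let s_j = α + β·s_h + ε with ε ~ N(0, κ²) independent of s_h (κ > 0), and conditionally on (s_h, s_j) let w_h and w_j be independent with w_h ~ N(0, exp(s_h)) and w_j ~ N(0, exp(s_j)). Set μ_h = α + β·μ_ρ and σ_h² = κ² + β²·σ_ρ². Then the parent–child fourth cross-moment is E[w_j² w_h²] = exp(μ_h + μ_ρ + β·σ_ρ² + σ_h²/2 + σ_ρ²/2), where β·σ_ρ² = Cov(s_h, s_j). -/
open MeasureTheory ProbabilityTheory Real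
open scoped NNReal
open Filter
open scoped ENNReal Topology

lemma exp_mul_pdf (t μ : ℝ) (v : ℝ≥0) (hv : v ≠ 0) (x : ℝ) :
    Real.exp (t*x) * gaussianPDFReal μ v x
      = Real.exp (t*μ + t^2*v/2) * gaussianPDFReal (μ + t*v) v x := by
  have hv' : (0:ℝ) < v := lt_of_le_of_ne v.coe_nonneg (by exact_mod_cast (Ne.symm hv))
  have h1 : rexp (t*x) * rexp (-(x - μ)^2/(2*(v:ℝ)))
      = rexp (t*μ + t^2*(v:ℝ)/2) * rexp (-(x - (μ+t*(v:ℝ)))^2/(2*(v:ℝ))) := by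
    rw [← Real.exp_add, ← Real.exp_add]
    congr 1
    field_simp
    ring
  unfold gaussianPDFReal
  calc rexp (t * x) * ((√(2 * π * ↑v))⁻¹ * rexp (-(x - μ) ^ 2 / (2 * ↑v)))
      = (√(2 * π * ↑v))⁻¹ * (rexp (t*x) * rexp (-(x - μ)^2/(2*(v:ℝ)))) := by ring
    _ = (√(2 * π * ↑v))⁻¹ * (rexp (t*μ + t^2*(v:ℝ)/2) * rexp (-(x - (μ+t*(v:ℝ)))^2/(2*(v:ℝ)))) := by rw [h1]
    _ = rexp (t * μ + t ^ 2 * ↑v / 2) * ((√(2 * π * ↑v))⁻¹ * rexp (-(x - (μ + t * ↑v)) ^ 2 / (2 * ↑v))) := by ring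

lemma integral_exp_mul_pdf (t μ : ℝ) (v : ℝ≥0) (hv : v ≠ 0) :
    ∫ x, Real.exp (t*x) * gaussianPDFReal μ v x = Real.exp (t*μ + t^2*v/2) := by
  simp_rw [exp_mul_pdf t μ v hv]
  rw [MeasureTheory.integral_const_mul, integral_gaussianPDFReal_eq_one _ hv, mul_one]

lemma integrable_exp_mul_pdf (t μ : ℝ) (v : ℝ≥0) (hv : v ≠ 0) :
    Integrable (fun x => Real.exp (t*x) * gaussianPDFReal μ v x) := by
  simp_rw [exp_mul_pdf t μ v hv]
  exact (integrable_gaussianPDFReal _ _).const_mul _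


lemma lintegral_exp_gaussianReal (t μ : ℝ) (v : ℝ≥0) (hv : v ≠ 0) :
    ∫⁻ x, ENNReal.ofReal (Real.exp (t*x)) ∂(gaussianReal μ v)
      = ENNReal.ofReal (Real.exp (t*μ + t^2*v/2)) := by
  rw [gaussianReal_of_var_ne_zero _ hv,
    lintegral_withDensity_eq_lintegral_mul _ (measurable_gaussianPDF μ v)
      ((measurable_const_mul t).exp.ennreal_ofReal)]
  have : ∀ x, (gaussianPDF μ v * fun x => ENNReal.ofReal (rexp (t*x))) x
      = ENNReal.ofReal (rexp (t*x) * gaussianPDFReal μ v x) := by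
    intro x
    simp only [Pi.mul_apply, gaussianPDF]
    rw [← ENNReal.ofReal_mul (gaussianPDFReal_nonneg μ v x), mul_comm]
  simp_rw [this]
  rw [← ofReal_integral_eq_lintegral_ofReal (integrable_exp_mul_pdf t μ v hv)
    (Filter.Eventually.of_forall fun x => mul_nonneg (Real.exp_nonneg _) (gaussianPDFReal_nonneg μ v x)),
    integral_exp_mul_pdf t μ v hv]


lemma integral_sq_mul_pdf (v : ℝ≥0) (hv : v ≠ 0) :
    ∫ x, x^2 * gaussianPDFReal 0 v x = v := by
  have hv' : (0:ℝ) < v := lt_of_le_of_ne v.coe_nonneg (by exact_mod_cast (Ne.symm hv))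
  set b : ℝ := (2*(v:ℝ))⁻¹ with hb
  have hbpos : 0 < b := by positivity
  have hbv : 2*(v:ℝ)*b = 1 := by rw [hb]; exact mul_inv_cancel₀ (by positivity)
  have hexp : Integrable fun x : ℝ => rexp (-b*x^2) := integrable_exp_neg_mul_sq hbpos
  have hsq : Integrable fun x : ℝ => x^2 * rexp (-b*x^2) := by
    have := integrable_rpow_mul_exp_neg_mul_sq hbpos (s := 2) (by norm_num)
    have h2 : ∀ x : ℝ, x ^ (2:ℝ) = x ^ 2 := fun x => by
      rw [show (2:ℝ) = ((2:ℕ):ℝ) by norm_num, Real.rpow_natCast]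
    simpa [h2] using this
  have hdiff : Integrable fun x : ℝ => (x^2 - (v:ℝ)) * rexp (-b*x^2) := by
    simp_rw [sub_mul]
    exact hsq.sub (hexp.const_mul _)
  set F : ℝ → ℝ := fun x => -(v:ℝ) * x * rexp (-b*x^2) with hFdef
  have hderiv : ∀ x : ℝ, HasDerivAt F ((x^2 - (v:ℝ)) * rexp (-b*x^2)) x := by
    intro x
    have h1 : HasDerivAt (fun y : ℝ => -b*y^2) (-b*(2*x)) x := by
      simpa [mul_comm] using ((hasDerivAt_pow 2 x).const_mul (-b))
    have h2 : HasDerivAt (fun y : ℝ => rexp (-b*y^2)) (rexp (-b*x^2) * (-b*(2*x))) x := h1.exp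
    have h3 : HasDerivAt (fun y : ℝ => -(v:ℝ)*y) (-(v:ℝ)) x := by
      simpa using (hasDerivAt_id x).const_mul (-(v:ℝ))
    have h4 := h3.mul h2
    refine h4.congr_deriv ?_; symm
    linear_combination (-(x^2) * rexp (-b*x^2)) * hbv
  have hcont : Continuous F := by
    apply (continuous_const.mul continuous_id).mul
    exact (continuous_const.mul (continuous_pow 2)).rexp
  have hT1 : Tendsto (fun x : ℝ => x * rexp (-b*x^2)) atTop (𝓝 0) := by
    have ho := rpow_mul_exp_neg_mul_sq_isLittleO_exp_neg hbpos 1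
    have hlim : Tendsto (fun x : ℝ => rexp (-(1/2) * x)) atTop (𝓝 0) := by
      have : Tendsto (fun x : ℝ => (1/2) * x) atTop atTop :=
        Tendsto.const_mul_atTop (by norm_num) tendsto_id
      have h := Real.tendsto_exp_neg_atTop_nhds_zero.comp this
      exact h.congr fun x => by simp [Function.comp, neg_mul]
    have := ho.trans_tendsto hlim
    simpa [Real.rpow_one] using this
  have hTop : Tendsto F atTop (𝓝 0) := by
    have := hT1.const_mul (-(v:ℝ))
    simpa [hFdef, mul_assoc] using this
  have hBot : Tendsto F atBot (𝓝 0) := by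
    have h1 : Tendsto (fun x : ℝ => F (-x)) atTop (𝓝 0) := by
      have := hT1.const_mul ((v:ℝ))
      simp only [mul_zero] at this ⊢
      refine this.congr fun x => ?_
      simp [hFdef]
      ring
    have := h1.comp tendsto_neg_atBot_atTop
    exact this.congr fun x => by simp [Function.comp, neg_neg]
  have hF0 : F 0 = 0 := by simp [hFdef]
  have hIoi : ∫ x in Set.Ioi (0:ℝ), (x^2 - (v:ℝ)) * rexp (-b*x^2) = 0 - F 0 :=
    integral_Ioi_of_hasDerivAt_of_tendsto hcont.continuousWithinAt
      (fun x _ => hderiv x) hdiff.integrableOn hTop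
  have hIic : ∫ x in Set.Iic (0:ℝ), (x^2 - (v:ℝ)) * rexp (-b*x^2) = F 0 - 0 :=
    integral_Iic_of_hasDerivAt_of_tendsto hcont.continuousWithinAt
      (fun x _ => hderiv x) hdiff.integrableOn hBot
  have h0 : ∫ x, (x^2 - (v:ℝ)) * rexp (-b*x^2) = 0 := by
    have hadd := integral_add_compl (measurableSet_Iic (a := (0:ℝ))) hdiff
    rw [Set.compl_Iic] at hadd
    rw [← hadd, hIic, hIoi, hF0]
    ring
  have h1 : ∫ x, x^2 * rexp (-b*x^2) = (v:ℝ) * ∫ x, rexp (-b*x^2) := by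
    simp_rw [sub_mul] at h0
    rw [integral_sub hsq (hexp.const_mul _)] at h0
    rw [integral_const_mul] at h0
    linarith
  have hpdf : ∀ x : ℝ, gaussianPDFReal 0 v x = (√(2*π*(v:ℝ)))⁻¹ * rexp (-b*x^2) := by
    intro x
    unfold gaussianPDFReal
    congr 1
    rw [sub_zero, neg_div, div_eq_inv_mul, ← hb, neg_mul]
  simp_rw [hpdf]
  have hc : ∫ x, x^2 * ((√(2*π*(v:ℝ)))⁻¹ * rexp (-b*x^2))
      = (√(2*π*(v:ℝ)))⁻¹ * ∫ x, x^2 * rexp (-b*x^2) := by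
    rw [← integral_const_mul]
    congr 1
    funext x
    ring
  rw [hc, h1, ← mul_assoc, mul_comm ((√(2*π*(v:ℝ)))⁻¹) ((v:ℝ)), mul_assoc, ← integral_const_mul]
  have : ∫ x, (√(2*π*(v:ℝ)))⁻¹ * rexp (-b*x^2) = 1 := by
    simp_rw [← hpdf]
    exact integral_gaussianPDFReal_eq_one 0 hv
  rw [this, mul_one]

lemma integrable_sq_mul_pdf (v : ℝ≥0) (hv : v ≠ 0) :
    Integrable (fun x => x^2 * gaussianPDFReal 0 v x) := by
  have hv' : (0:ℝ) < v := lt_of_le_of_ne v.coe_nonneg (by exact_mod_cast (Ne.symm hv))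
  set b : ℝ := (2*(v:ℝ))⁻¹ with hb
  have hbpos : 0 < b := by positivity
  have hsq : Integrable fun x : ℝ => x^2 * rexp (-b*x^2) := by
    have := integrable_rpow_mul_exp_neg_mul_sq hbpos (s := 2) (by norm_num)
    have h2 : ∀ x : ℝ, x ^ (2:ℝ) = x ^ 2 := fun x => by
      rw [show (2:ℝ) = ((2:ℕ):ℝ) by norm_num, Real.rpow_natCast]
    simpa [h2] using this
  have hpdf : ∀ x : ℝ, gaussianPDFReal 0 v x = (√(2*π*(v:ℝ)))⁻¹ * rexp (-b*x^2) := by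
    intro x
    unfold gaussianPDFReal
    congr 1
    rw [sub_zero, neg_div, div_eq_inv_mul, ← hb, neg_mul]
  simp_rw [hpdf]
  have : ∀ x : ℝ, x^2 * ((√(2*π*(v:ℝ)))⁻¹ * rexp (-b*x^2))
      = (√(2*π*(v:ℝ)))⁻¹ * (x^2 * rexp (-b*x^2)) := fun x => by ring
  simp_rw [this]
  exact hsq.const_mul _


lemma lintegral_sq_gaussianReal (v : ℝ≥0) (hv : v ≠ 0) :
    ∫⁻ x, ENNReal.ofReal (x^2) ∂(gaussianReal 0 v) = (v : ℝ≥0∞) := by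
  rw [gaussianReal_of_var_ne_zero _ hv,
    lintegral_withDensity_eq_lintegral_mul _ (measurable_gaussianPDF 0 v)
      ((measurable_id'.pow_const 2).ennreal_ofReal)]
  have : ∀ x : ℝ, (gaussianPDF 0 v * fun x => ENNReal.ofReal (x^2)) x
      = ENNReal.ofReal (x^2 * gaussianPDFReal 0 v x) := by
    intro x
    simp only [Pi.mul_apply, gaussianPDF]
    rw [← ENNReal.ofReal_mul (gaussianPDFReal_nonneg 0 v x), mul_comm]
  simp_rw [this]
  rw [← ofReal_integral_eq_lintegral_ofReal (integrable_sq_mul_pdf v hv)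
    (Filter.Eventually.of_forall fun x => mul_nonneg (sq_nonneg _) (gaussianPDFReal_nonneg 0 v x)),
    integral_sq_mul_pdf v hv, ENNReal.ofReal_coe_nnreal]

-- joint measurability of the gaussian pdf
lemma measurable_pdf_jointly {α : Type*} [MeasurableSpace α]
    {m : α → ℝ} {w : α → ℝ≥0} (hm : Measurable m) (hw : Measurable w) :
    Measurable (fun p : α × ℝ => gaussianPDF (m p.1) (w p.1) p.2) := by
  unfold gaussianPDF gaussianPDFReal
  apply Measurable.ennreal_ofReal
  apply Measurable.mul
  · apply Measurable.inv
    apply Measurable.sqrt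
    exact (measurable_const.mul ((measurable_coe_nnreal_real.comp hw).comp measurable_fst))
  · apply Measurable.exp
    apply Measurable.div
    · apply Measurable.neg
      exact (measurable_snd.sub (hm.comp measurable_fst)).pow_const 2
    · exact measurable_const.mul ((measurable_coe_nnreal_real.comp hw).comp measurable_fst)

lemma measurable_gaussianReal_comp {α : Type*} [MeasurableSpace α]
    {m : α → ℝ} {w : α → ℝ≥0} (hm : Measurable m) (hw : Measurable w)
    (hw0 : ∀ a, w a ≠ 0) :
    Measurable (fun a => gaussianReal (m a) (w a)) := by
  apply Measure.measurable_of_measurable_coe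
  intro s hs
  have : ∀ a, gaussianReal (m a) (w a) s
      = ∫⁻ x, gaussianPDF (m a) (w a) x * s.indicator (fun _ => 1) x := by
    intro a
    rw [gaussianReal_apply _ (hw0 a) s, ← lintegral_indicator hs _]
    refine lintegral_congr fun x => ?_
    by_cases hx : x ∈ s <;> simp [Set.indicator_apply, hx]
  simp_rw [this]
  apply Measurable.lintegral_prod_right'
    (f := fun p : α × ℝ => gaussianPDF (m p.1) (w p.1) p.2 * s.indicator (fun _ => 1) p.2)
  exact (measurable_pdf_jointly hm hw).mul
    ((measurable_one.indicator hs).comp measurable_snd)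


lemma measurable_k1 (α β : ℝ) (κ : ℝ≥0) (hκ : 0 < κ) :
    Measurable (fun sh : ℝ =>
      (gaussianReal (α + β * sh) (κ ^ 2)).map (fun sj => (sh, sj))) := by
  have hκ2 : (κ^2 : ℝ≥0) ≠ 0 := pow_ne_zero 2 hκ.ne'
  apply Measure.measurable_of_measurable_coe
  intro s hs
  have key : ∀ sh : ℝ, (gaussianReal (α + β * sh) (κ ^ 2)).map (fun sj => (sh, sj)) s
      = ∫⁻ x, gaussianPDF (α + β * sh) (κ^2) x * s.indicator (fun _ => 1) (sh, x) := by
    intro sh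
    rw [Measure.map_apply measurable_prodMk_left hs,
      gaussianReal_apply _ hκ2 _,
      ← lintegral_indicator (measurable_prodMk_left hs) _]
    refine lintegral_congr fun x => ?_
    by_cases hx : (sh, x) ∈ s <;> simp [Set.indicator_apply, hx, Set.mem_preimage]
  simp_rw [key]
  apply Measurable.lintegral_prod_right'
    (f := fun p : ℝ × ℝ => gaussianPDF (α + β * p.1) (κ^2) p.2 * s.indicator (fun _ => 1) p)
  exact (measurable_pdf_jointly (measurable_const.add (measurable_const.mul measurable_id))
    measurable_const).mul (measurable_one.indicator hs)

noncomputable def expKer1 : Kernel (ℝ × ℝ) ℝ :=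
  ⟨fun s => gaussianReal 0 (Real.exp s.1).toNNReal,
    measurable_gaussianReal_comp measurable_const
      ((Real.measurable_exp.comp measurable_fst).real_toNNReal)
      (fun s => (Real.toNNReal_pos.mpr (Real.exp_pos _)).ne')⟩

noncomputable def expKer2 : Kernel (ℝ × ℝ) ℝ :=
  ⟨fun s => gaussianReal 0 (Real.exp s.2).toNNReal,
    measurable_gaussianReal_comp measurable_const
      ((Real.measurable_exp.comp measurable_snd).real_toNNReal)
      (fun s => (Real.toNNReal_pos.mpr (Real.exp_pos _)).ne')⟩

instance : IsMarkovKernel expKer1 :=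
  ⟨fun a => show IsProbabilityMeasure (gaussianReal 0 (Real.exp a.1).toNNReal)
    from inferInstance⟩
instance : IsMarkovKernel expKer2 :=
  ⟨fun a => show IsProbabilityMeasure (gaussianReal 0 (Real.exp a.2).toNNReal)
    from inferInstance⟩

lemma measurable_k2 :
    Measurable (fun s : ℝ × ℝ =>
      (gaussianReal 0 (Real.exp s.1).toNNReal).prod
        (gaussianReal 0 (Real.exp s.2).toNNReal)) := by
  have : (fun s : ℝ × ℝ => (gaussianReal 0 (Real.exp s.1).toNNReal).prod
      (gaussianReal 0 (Real.exp s.2).toNNReal))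
      = fun s => (expKer1 ×ₖ expKer2) s := by
    funext s
    rw [Kernel.prod_apply]
    rfl
  rw [this]
  exact (expKer1 ×ₖ expKer2).measurable


/-- Parent–child fourth cross-moment in the two-level GLG model: with parent hidden
state `s_h ~ N(μρ, σρ²)`, child hidden state `s_j = α + β s_h + ε`, `ε ~ N(0, κ²)`,
and wavelet coefficients `(w_h, w_j)` conditionally independent `N(0, exp s_h)` and
`N(0, exp s_j)`, one has `E[w_j² w_h²] = exp (μ_h + μ_ρ + β σρ² + σ_h²/2 + σρ²/2)`. -/
theorem glg_parent_child_cross_moment (μρ α β : ℝ) (σρ κ : ℝ≥0)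
    (hσρ : 0 < σρ) (hκ : 0 < κ)
    (ν : Measure (ℝ × ℝ)) (W : Measure (ℝ × ℝ)) (μh σhsq : ℝ)
    (hν : ν = (gaussianReal μρ (σρ ^ 2)).bind
      (fun sh => (gaussianReal (α + β * sh) (κ ^ 2)).map (fun sj => (sh, sj))))
    (hW : W = ν.bind (fun s =>
      (gaussianReal 0 (Real.exp s.1).toNNReal).prod
        (gaussianReal 0 (Real.exp s.2).toNNReal)))
    (hμh : μh = α + β * μρ) (hσh : σhsq = (κ : ℝ) ^ 2 + β ^ 2 * (σρ : ℝ) ^ 2) :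
    ∫ w, (w.2) ^ 2 * (w.1) ^ 2 ∂W =
      Real.exp (μh + μρ + β * (σρ : ℝ) ^ 2 + σhsq / 2 + (σρ : ℝ) ^ 2 / 2) := by
  subst hν hW hμh hσh
  have hf : Measurable fun w : ℝ × ℝ => ENNReal.ofReal (w.2^2 * w.1^2) :=
    ((measurable_snd.pow_const 2).mul (measurable_fst.pow_const 2)).ennreal_ofReal
  have hg : Measurable fun s : ℝ × ℝ => ENNReal.ofReal (Real.exp (s.1 + s.2)) :=
    ((measurable_fst.add measurable_snd).exp).ennreal_ofReal
  -- inner product-measure integral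
  have inner1 : ∀ s : ℝ × ℝ,
      ∫⁻ w, ENNReal.ofReal (w.2^2 * w.1^2)
        ∂((gaussianReal 0 (Real.exp s.1).toNNReal).prod
          (gaussianReal 0 (Real.exp s.2).toNNReal))
      = ENNReal.ofReal (Real.exp (s.1 + s.2)) := by
    intro s
    rw [lintegral_prod _ hf.aemeasurable]
    have : ∀ x : ℝ, ∫⁻ y, ENNReal.ofReal (y^2 * x^2)
        ∂(gaussianReal 0 (Real.exp s.2).toNNReal)
        = ENNReal.ofReal (Real.exp s.2) * ENNReal.ofReal (x^2) := by
      intro x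
      have : ∀ y : ℝ, ENNReal.ofReal (y^2 * x^2)
          = ENNReal.ofReal (y^2) * ENNReal.ofReal (x^2) := fun y =>
        ENNReal.ofReal_mul (sq_nonneg y)
      simp_rw [this]
      rw [lintegral_mul_const _ (measurable_id'.pow_const 2).ennreal_ofReal,
        lintegral_sq_gaussianReal _ (Real.toNNReal_pos.mpr (Real.exp_pos _)).ne']
      rfl
    simp_rw [this]
    rw [lintegral_const_mul _ (measurable_id'.pow_const 2).ennreal_ofReal,
      lintegral_sq_gaussianReal _ (Real.toNNReal_pos.mpr (Real.exp_pos _)).ne']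
    rw [show ((Real.exp s.1).toNNReal : ℝ≥0∞) = ENNReal.ofReal (Real.exp s.1) by
      simp [ENNReal.ofReal]]
    rw [← ENNReal.ofReal_mul (Real.exp_nonneg _), ← Real.exp_add, add_comm s.2 s.1]
  -- integral over ν of exp(s1+s2)
  have hκ2 : (κ^2 : ℝ≥0) ≠ 0 := pow_ne_zero 2 hκ.ne'
  have hσρ2 : (σρ^2 : ℝ≥0) ≠ 0 := pow_ne_zero 2 hσρ.ne'
  have inner2 : ∀ sh : ℝ,
      ∫⁻ p, ENNReal.ofReal (Real.exp (p.1 + p.2))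
        ∂((gaussianReal (α + β * sh) (κ ^ 2)).map (fun sj => (sh, sj)))
      = ENNReal.ofReal (Real.exp ((1+β) * sh + (α + (κ:ℝ)^2/2))) := by
    intro sh
    rw [lintegral_map hg measurable_prodMk_left]
    have : ∀ sj : ℝ, ENNReal.ofReal (Real.exp (sh + sj))
        = ENNReal.ofReal (Real.exp sh) * ENNReal.ofReal (Real.exp (1*sj)) := by
      intro sj
      rw [← ENNReal.ofReal_mul (Real.exp_nonneg _), ← Real.exp_add, one_mul]
    simp_rw [this]
    rw [lintegral_const_mul _ ((measurable_const_mul 1).exp.ennreal_ofReal),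
      lintegral_exp_gaussianReal 1 (α + β * sh) (κ^2) hκ2,
      ← ENNReal.ofReal_mul (Real.exp_nonneg _), ← Real.exp_add]
    congr 2
    push_cast
    ring
  -- assemble
  rw [integral_eq_lintegral_of_nonneg_ae
    (Filter.Eventually.of_forall fun w => mul_nonneg (sq_nonneg _) (sq_nonneg _))
    (((measurable_snd.pow_const 2).mul (measurable_fst.pow_const 2)).aestronglyMeasurable)]
  rw [Measure.lintegral_bind measurable_k2.aemeasurable hf.aemeasurable]
  simp_rw [inner1]
  rw [Measure.lintegral_bind (measurable_k1 α β κ hκ).aemeasurable hg.aemeasurable]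
  simp_rw [inner2]
  have : ∀ sh : ℝ, ENNReal.ofReal (Real.exp ((1+β) * sh + (α + (κ:ℝ)^2/2)))
      = ENNReal.ofReal (Real.exp (α + (κ:ℝ)^2/2)) * ENNReal.ofReal (Real.exp ((1+β)*sh)) := by
    intro sh
    rw [← ENNReal.ofReal_mul (Real.exp_nonneg _), ← Real.exp_add, add_comm]
  simp_rw [this]
  rw [lintegral_const_mul _ ((measurable_const_mul (1+β)).exp.ennreal_ofReal),
    lintegral_exp_gaussianReal (1+β) μρ (σρ^2) hσρ2,
    ← ENNReal.ofReal_mul (Real.exp_nonneg _), ← Real.exp_add,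
    ENNReal.toReal_ofReal (Real.exp_nonneg _)]
  congr 1
  push_cast
  ring
end

section
/- Consider the two-level GLG model with two children: let s_h ~ N(μ_ρ, σ_ρ²) with σ_ρ > 0, let s_{j₁} = α + β·s_h + ε₁ and s_{j₂} = α + β·s_h + ε₂ where ε₁, ε₂ ~ N(0, κ²) are independent of each other and of s_h (κ > 0), and conditionally on (s_{j₁}, s_{j₂}) let w_{j₁}, w_{j₂} be independent with w_{jₖ} ~ N(0, exp(s_{jₖ})). Set μ_h = α + β·μ_ρ and σ_h² = κ² + β²·σ_ρ². Then the sibling fourth cross-moment is E[w_{j₁}² w_{j₂}²] = exp(2μ_h + β²·σ_ρ² + σ_h²), where β²·σ_ρ² = Cov(s_{j₁}, s_{j₂}). -/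
open MeasureTheory ProbabilityTheory Real
open scoped NNReal

lemma measurable_map_param {γ δ δ' : Type*} [MeasurableSpace γ] [MeasurableSpace δ]
    [MeasurableSpace δ'] (ν : Measure δ) [SFinite ν] {F : γ → δ → δ'}
    (hF : Measurable (Function.uncurry F)) :
    Measurable fun c => ν.map (F c) := by
  apply Measure.measurable_of_measurable_coe
  intro s hs
  have hFc : ∀ c, Measurable (F c) := fun c => hF.comp measurable_prodMk_left
  simp_rw [Measure.map_apply (hFc _) hs]
  have h : ∀ c, F c ⁻¹' s = Prod.mk c ⁻¹' (Function.uncurry F ⁻¹' s) := fun c => rfl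
  simp_rw [h]
  exact measurable_measure_prodMk_left (hF hs)

lemma measurable_M1 (α β : ℝ) (κ : ℝ≥0) :
    Measurable fun sh : ℝ => (gaussianReal (α + β * sh) (κ ^ 2)).prod
      (gaussianReal (α + β * sh) (κ ^ 2)) := by
  have h : ∀ sh : ℝ, (gaussianReal (α + β * sh) (κ ^ 2)).prod (gaussianReal (α + β * sh) (κ ^ 2))
      = ((gaussianReal 0 (κ ^ 2)).prod (gaussianReal 0 (κ ^ 2))).map
          (Prod.map ((α + β * sh) + ·) ((α + β * sh) + ·)) := by
    intro sh
    rw [← Measure.map_prod_map _ _ (by fun_prop) (by fun_prop),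
      gaussianReal_map_const_add, zero_add]
  simp_rw [h]
  refine measurable_map_param _ ?_
  show Measurable fun q : ℝ × (ℝ × ℝ) => ((α + β * q.1 + q.2.1, α + β * q.1 + q.2.2) : ℝ × ℝ)
  fun_prop

lemma gauss_exp_var_eq (s : ℝ) :
    gaussianReal 0 (Real.exp s).toNNReal
      = (gaussianReal 0 1).map (fun x => Real.exp (s / 2) * x) := by
  rw [gaussianReal_map_const_mul, mul_zero]
  congr 1
  apply NNReal.coe_injective
  push_cast
  rw [mul_one, Real.coe_toNNReal _ (Real.exp_pos s).le, sq, ← Real.exp_add]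
  norm_num

lemma measurable_M2 :
    Measurable fun s : ℝ × ℝ => (gaussianReal 0 (Real.exp s.1).toNNReal).prod
      (gaussianReal 0 (Real.exp s.2).toNNReal) := by
  have h : ∀ s : ℝ × ℝ, (gaussianReal 0 (Real.exp s.1).toNNReal).prod
      (gaussianReal 0 (Real.exp s.2).toNNReal)
      = ((gaussianReal 0 1).prod (gaussianReal 0 1)).map
          (Prod.map (fun x => Real.exp (s.1 / 2) * x) (fun x => Real.exp (s.2 / 2) * x)) := by
    intro s
    rw [← Measure.map_prod_map _ _ (by fun_prop) (by fun_prop), ← gauss_exp_var_eq,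
      ← gauss_exp_var_eq]
  simp_rw [h]
  refine measurable_map_param _ ?_
  show Measurable fun q : (ℝ × ℝ) × (ℝ × ℝ) =>
    ((Real.exp (q.1.1 / 2) * q.2.1, Real.exp (q.1.2 / 2) * q.2.2) : ℝ × ℝ)
  fun_prop

lemma pdf_mul_exp_eq (m : ℝ) (v : ℝ≥0) (hv : v ≠ 0) (t x : ℝ) :
    gaussianPDFReal m v x * Real.exp (t * x)
      = Real.exp (t * m + (v : ℝ) * t ^ 2 / 2) * gaussianPDFReal (m + t * v) v x := by
  have hv' : (0 : ℝ) < v := lt_of_le_of_ne v.coe_nonneg (by exact_mod_cast (Ne.symm hv))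
  simp only [gaussianPDFReal]
  have hexp : Real.exp (-(x - m) ^ 2 / (2 * v)) * Real.exp (t * x)
      = Real.exp (t * m + (v : ℝ) * t ^ 2 / 2) * Real.exp (-(x - (m + t * v)) ^ 2 / (2 * v)) := by
    rw [← Real.exp_add, ← Real.exp_add]
    congr 1
    field_simp
    ring
  rw [mul_assoc, hexp]
  ring

lemma integrable_pdf_mul_exp (m : ℝ) (v : ℝ≥0) (hv : v ≠ 0) (t : ℝ) :
    Integrable (fun x => gaussianPDFReal m v x * Real.exp (t * x)) := by
  simp_rw [pdf_mul_exp_eq m v hv t]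
  exact (integrable_gaussianPDFReal _ _).const_mul _

lemma integral_pdf_mul_exp (m : ℝ) (v : ℝ≥0) (hv : v ≠ 0) (t : ℝ) :
    ∫ x, gaussianPDFReal m v x * Real.exp (t * x)
      = Real.exp (t * m + (v : ℝ) * t ^ 2 / 2) := by
  simp_rw [pdf_mul_exp_eq m v hv t]
  rw [MeasureTheory.integral_const_mul, integral_gaussianPDFReal_eq_one _ hv, mul_one]

lemma integrable_sq_exp {b : ℝ} (hb : 0 < b) :
    Integrable fun x : ℝ => x ^ 2 * Real.exp (-b * x ^ 2) := by
  have h := integrable_rpow_mul_exp_neg_mul_sq hb (s := 2) (by norm_num)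
  have : ∀ x : ℝ, x ^ (2 : ℝ) = x ^ 2 := fun x => by
    rw [show (2 : ℝ) = ((2 : ℕ) : ℝ) by norm_num, Real.rpow_natCast]
  simpa [this] using h

lemma integral_sq_exp {b : ℝ} (hb : 0 < b) :
    ∫ x : ℝ, x ^ 2 * Real.exp (-b * x ^ 2) = (2 * b)⁻¹ * Real.sqrt (π / b) := by
  have hb' : b ≠ 0 := hb.ne'
  have hu : ∀ x : ℝ, HasDerivAt (fun y : ℝ => y) 1 x := fun x => hasDerivAt_id x
  have hv : ∀ x : ℝ, HasDerivAt (fun y => -(2 * b)⁻¹ * Real.exp (-b * y ^ 2))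
      (x * Real.exp (-b * x ^ 2)) x := by
    intro x
    have h1 : HasDerivAt (fun y : ℝ => -b * y ^ 2) (-b * (2 * x)) x := by
      simpa using ((hasDerivAt_pow 2 x).const_mul (-b))
    have h2 := (h1.exp).const_mul (-(2 * b)⁻¹)
    refine h2.congr_deriv ?_
    field_simp
  have huv' : Integrable ((fun y : ℝ => y) * fun x => x * Real.exp (-b * x ^ 2)) := by
    have := integrable_sq_exp hb
    apply this.congr
    · exact ae_of_all _ fun x => by simp [Pi.mul_apply]; ring
  have hu'v : Integrable ((fun _ : ℝ => (1 : ℝ)) * fun y => -(2 * b)⁻¹ * Real.exp (-b * y ^ 2)) := by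
    have := (integrable_exp_neg_mul_sq hb).const_mul (-(2 * b)⁻¹)
    apply this.congr
    exact ae_of_all _ fun x => by simp [Pi.mul_apply]
  have huv : Integrable ((fun y : ℝ => y) * fun y => -(2 * b)⁻¹ * Real.exp (-b * y ^ 2)) := by
    have := (integrable_mul_exp_neg_mul_sq hb).const_mul (-(2 * b)⁻¹)
    apply this.congr
    exact ae_of_all _ fun x => by simp [Pi.mul_apply]; ring
  have key := integral_mul_deriv_eq_deriv_mul_of_integrable (fun x _ => hu x) (fun x _ => hv x) huv' hu'v huv
  have e1 : ∫ x : ℝ, x * (x * Real.exp (-b * x ^ 2)) = ∫ x : ℝ, x ^ 2 * Real.exp (-b * x ^ 2) := by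
    congr 1; funext x; ring
  rw [e1] at key
  rw [key]
  have e2 : ∫ x : ℝ, (1 : ℝ) * (-(2 * b)⁻¹ * Real.exp (-b * x ^ 2))
      = -(2 * b)⁻¹ * ∫ x : ℝ, Real.exp (-b * x ^ 2) := by
    simp_rw [one_mul]
    exact MeasureTheory.integral_const_mul _ _
  rw [e2, integral_gaussian]
  ring


lemma pos_of_nnreal_ne {v : ℝ≥0} (hv : v ≠ 0) : (0 : ℝ) < v :=
  lt_of_le_of_ne v.coe_nonneg (by exact_mod_cast (Ne.symm hv))

lemma pdf_mul_sq_eq (v : ℝ≥0) (hv : v ≠ 0) (x : ℝ) :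
    gaussianPDFReal 0 v x * x ^ 2
      = (Real.sqrt (2 * π * v))⁻¹ * (x ^ 2 * Real.exp (-(2 * (v : ℝ))⁻¹ * x ^ 2)) := by
  have hv' := pos_of_nnreal_ne hv
  simp only [gaussianPDFReal, sub_zero]
  rw [show -(x : ℝ) ^ 2 / (2 * v) = -(2 * (v : ℝ))⁻¹ * x ^ 2 by field_simp]
  ring

lemma integrable_pdf_mul_sq (v : ℝ≥0) (hv : v ≠ 0) :
    Integrable (fun x => gaussianPDFReal 0 v x * x ^ 2) := by
  have hv' := pos_of_nnreal_ne hv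
  simp_rw [pdf_mul_sq_eq v hv]
  exact (integrable_sq_exp (by positivity)).const_mul _

lemma integral_pdf_mul_sq (v : ℝ≥0) (hv : v ≠ 0) :
    ∫ x, gaussianPDFReal 0 v x * x ^ 2 = (v : ℝ) := by
  have hv' := pos_of_nnreal_ne hv
  simp_rw [pdf_mul_sq_eq v hv]
  rw [MeasureTheory.integral_const_mul, integral_sq_exp (by positivity : (0:ℝ) < (2 * (v:ℝ))⁻¹)]
  have h1 : ((2 : ℝ) * (2 * (v : ℝ))⁻¹)⁻¹ = (v : ℝ) := by field_simp
  have h2 : Real.sqrt (π / (2 * (v : ℝ))⁻¹) = Real.sqrt (2 * π * v) := by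
    congr 1; field_simp
  rw [h1, h2]
  have h3 : Real.sqrt (2 * π * v) ≠ 0 := by positivity
  field_simp

lemma lintegral_ofReal_gaussian (m : ℝ) (v : ℝ≥0) (hv : v ≠ 0) {f : ℝ → ℝ}
    (hf : Measurable f) (hf0 : ∀ x, 0 ≤ f x)
    (hfi : Integrable (fun x => gaussianPDFReal m v x * f x)) :
    ∫⁻ x, ENNReal.ofReal (f x) ∂gaussianReal m v
      = ENNReal.ofReal (∫ x, gaussianPDFReal m v x * f x) := by
  rw [gaussianReal_of_var_ne_zero m hv,
    lintegral_withDensity_eq_lintegral_mul _ (measurable_gaussianPDF m v)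
      hf.ennreal_ofReal]
  have h : ∀ x, (gaussianPDF m v * fun x => ENNReal.ofReal (f x)) x
      = ENNReal.ofReal (gaussianPDFReal m v x * f x) := fun x => by
    simp only [Pi.mul_apply, gaussianPDF]
    rw [← ENNReal.ofReal_mul (gaussianPDFReal_nonneg m v x)]
  simp_rw [h]
  rw [← ofReal_integral_eq_lintegral_ofReal hfi
    (ae_of_all _ fun x => mul_nonneg (gaussianPDFReal_nonneg m v x) (hf0 x))]

lemma lintegral_exp_gaussian (m : ℝ) (v : ℝ≥0) (hv : v ≠ 0) (t : ℝ) :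
    ∫⁻ x, ENNReal.ofReal (Real.exp (t * x)) ∂gaussianReal m v
      = ENNReal.ofReal (Real.exp (t * m + (v : ℝ) * t ^ 2 / 2)) := by
  rw [lintegral_ofReal_gaussian m v hv (by fun_prop) (fun x => (Real.exp_pos _).le)
    (integrable_pdf_mul_exp m v hv t), integral_pdf_mul_exp m v hv t]

lemma lintegral_sq_gaussian (v : ℝ≥0) (hv : v ≠ 0) :
    ∫⁻ x, ENNReal.ofReal (x ^ 2) ∂gaussianReal 0 v = ENNReal.ofReal (v : ℝ) := by
  rw [lintegral_ofReal_gaussian 0 v hv (by fun_prop) (fun x => sq_nonneg x)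
    (integrable_pdf_mul_sq v hv), integral_pdf_mul_sq v hv]

/-- Sibling fourth cross-moment in the two-level GLG model with two children: with
parent hidden state `s_h ~ N(μρ, σρ²)`, child hidden states
`s_{jₖ} = α + β s_h + εₖ` with `ε₁, ε₂ ~ N(0, κ²)` independent, and wavelet
coefficients `(w_{j₁}, w_{j₂})` conditionally independent `N(0, exp s_{jₖ})`, one has
`E[w_{j₁}² w_{j₂}²] = exp (2 μ_h + β² σρ² + σ_h²)`. -/
theorem glg_sibling_cross_moment (μρ α β : ℝ) (σρ κ : ℝ≥0)
    (hσρ : 0 < σρ) (hκ : 0 < κ)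
    (ν : Measure (ℝ × ℝ)) (W : Measure (ℝ × ℝ)) (μh σhsq : ℝ)
    (hν : ν = (gaussianReal μρ (σρ ^ 2)).bind
      (fun sh => (gaussianReal (α + β * sh) (κ ^ 2)).prod
        (gaussianReal (α + β * sh) (κ ^ 2))))
    (hW : W = ν.bind (fun s =>
      (gaussianReal 0 (Real.exp s.1).toNNReal).prod
        (gaussianReal 0 (Real.exp s.2).toNNReal)))
    (hμh : μh = α + β * μρ) (hσh : σhsq = (κ : ℝ) ^ 2 + β ^ 2 * (σρ : ℝ) ^ 2) :
    ∫ w, (w.1) ^ 2 * (w.2) ^ 2 ∂W =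
      Real.exp (2 * μh + β ^ 2 * (σρ : ℝ) ^ 2 + σhsq) := by
  have hκ2 : (κ ^ 2 : ℝ≥0) ≠ 0 := pow_ne_zero _ hκ.ne'
  have hσρ2 : (σρ ^ 2 : ℝ≥0) ≠ 0 := pow_ne_zero _ hσρ.ne'
  have hfm : Measurable fun w : ℝ × ℝ => w.1 ^ 2 * w.2 ^ 2 := by fun_prop
  rw [MeasureTheory.integral_eq_lintegral_of_nonneg_ae
    (ae_of_all _ fun w => by positivity) hfm.aestronglyMeasurable]
  have key : ∫⁻ w, ENNReal.ofReal (w.1 ^ 2 * w.2 ^ 2) ∂W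
      = ENNReal.ofReal (Real.exp (2 * μh + β ^ 2 * (σρ : ℝ) ^ 2 + σhsq)) := by
    rw [hW, Measure.lintegral_bind measurable_M2.aemeasurable
      (f := fun w : ℝ × ℝ => ENNReal.ofReal (w.1 ^ 2 * w.2 ^ 2)) (by fun_prop)]
    have inner : ∀ s : ℝ × ℝ, ∫⁻ w, ENNReal.ofReal (w.1 ^ 2 * w.2 ^ 2)
        ∂((gaussianReal 0 (Real.exp s.1).toNNReal).prod
          (gaussianReal 0 (Real.exp s.2).toNNReal))
        = ENNReal.ofReal (Real.exp (s.1 + s.2)) := by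
      intro s
      have h1 : ∀ w : ℝ × ℝ, ENNReal.ofReal (w.1 ^ 2 * w.2 ^ 2)
          = ENNReal.ofReal (w.1 ^ 2) * ENNReal.ofReal (w.2 ^ 2) :=
        fun w => ENNReal.ofReal_mul (sq_nonneg _)
      simp_rw [h1]
      rw [lintegral_prod_mul (f := fun a : ℝ => ENNReal.ofReal (a ^ 2))
          (g := fun a : ℝ => ENNReal.ofReal (a ^ 2)) (by fun_prop) (by fun_prop),
        lintegral_sq_gaussian _ (ne_of_gt (Real.toNNReal_pos.mpr (Real.exp_pos _))),
        lintegral_sq_gaussian _ (ne_of_gt (Real.toNNReal_pos.mpr (Real.exp_pos _))),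
        Real.coe_toNNReal _ (Real.exp_pos _).le, Real.coe_toNNReal _ (Real.exp_pos _).le,
        ← ENNReal.ofReal_mul (Real.exp_pos _).le, ← Real.exp_add]
    simp_rw [inner]
    rw [hν, Measure.lintegral_bind (measurable_M1 α β κ).aemeasurable
      (f := fun s : ℝ × ℝ => ENNReal.ofReal (Real.exp (s.1 + s.2))) (by fun_prop)]
    have inner2 : ∀ sh : ℝ, ∫⁻ s, ENNReal.ofReal (Real.exp (s.1 + s.2))
        ∂((gaussianReal (α + β * sh) (κ ^ 2)).prod (gaussianReal (α + β * sh) (κ ^ 2)))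
        = ENNReal.ofReal (Real.exp (2 * (α + β * sh) + (κ : ℝ) ^ 2)) := by
      intro sh
      have h1 : ∀ s : ℝ × ℝ, ENNReal.ofReal (Real.exp (s.1 + s.2))
          = ENNReal.ofReal (Real.exp (1 * s.1)) * ENNReal.ofReal (Real.exp (1 * s.2)) :=
        fun s => by rw [← ENNReal.ofReal_mul (Real.exp_pos _).le, ← Real.exp_add]; norm_num
      simp_rw [h1]
      rw [lintegral_prod_mul (f := fun a : ℝ => ENNReal.ofReal (Real.exp (1 * a)))
          (g := fun a : ℝ => ENNReal.ofReal (Real.exp (1 * a))) (by fun_prop) (by fun_prop),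
        lintegral_exp_gaussian _ _ hκ2, ← ENNReal.ofReal_mul (Real.exp_pos _).le,
        ← Real.exp_add]
      congr 1
      push_cast
      ring
    simp_rw [inner2]
    have h2 : ∀ sh : ℝ, ENNReal.ofReal (Real.exp (2 * (α + β * sh) + (κ : ℝ) ^ 2))
        = ENNReal.ofReal (Real.exp (2 * α + (κ : ℝ) ^ 2))
          * ENNReal.ofReal (Real.exp ((2 * β) * sh)) := fun sh => by
      rw [← ENNReal.ofReal_mul (Real.exp_pos _).le, ← Real.exp_add]; congr 1; ring
    simp_rw [h2]
    rw [lintegral_const_mul _ (by fun_prop), lintegral_exp_gaussian _ _ hσρ2,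
      ← ENNReal.ofReal_mul (Real.exp_pos _).le, ← Real.exp_add]
    congr 1
    push_cast
    rw [hμh, hσh]
    ring
  rw [key, ENNReal.toReal_ofReal (Real.exp_pos _).le]
end

section
/- Consider the two-level GLG model with two children and β ≠ 0, σ_ρ > 0, κ > 0. Define the moments η⁽²⁾ = E[w_{j₁}²] = exp(μ_h + σ_h²/2), η_ρ⁽²⁾ = E[w_h²] = exp(μ_ρ + σ_ρ²/2), η⁽²'²⁾ = E[w_{j₁}² w_{j₂}²] = exp(2μ_h + β²σ_ρ² + σ_h²), and ξ⁽²'²⁾ = E[w_{j₁}² w_h²] = exp(μ_h + μ_ρ + βσ_ρ² + σ_h²/2 + σ_ρ²/2), where μ_h = α + βμ_ρ and σ_h² = κ² + β²σ_ρ². Then β = (log η⁽²'²⁾ − 2·log η⁽²⁾) / (log ξ⁽²'²⁾ − log η⁽²⁾ − log η_ρ⁽²⁾), the denominator being nonzero. -/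
open Real

/-- In the two-level GLG model with two children and `β ≠ 0`, the parameter `β` is
recovered from the moments `η⁽²⁾ = E[w_{j₁}²]`, `η_ρ⁽²⁾ = E[w_h²]`,
`η⁽²,²⁾ = E[w_{j₁}² w_{j₂}²]` and `ξ⁽²,²⁾ = E[w_{j₁}² w_h²]` by
`β = (log η⁽²,²⁾ - 2 log η⁽²⁾) / (log ξ⁽²,²⁾ - log η⁽²⁾ - log η_ρ⁽²⁾)`,
the denominator being nonzero. -/
theorem glg_beta_moment_recovery (μρ α β σρ κ : ℝ)
    (hβ : β ≠ 0) (hσρ : 0 < σρ) (hκ : 0 < κ)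
    (μh σhsq η₂ ηρ₂ η₂₂ ξ₂₂ : ℝ)
    (hμh : μh = α + β * μρ) (hσh : σhsq = κ ^ 2 + β ^ 2 * σρ ^ 2)
    (hη₂ : η₂ = Real.exp (μh + σhsq / 2))
    (hηρ₂ : ηρ₂ = Real.exp (μρ + σρ ^ 2 / 2))
    (hη₂₂ : η₂₂ = Real.exp (2 * μh + β ^ 2 * σρ ^ 2 + σhsq))
    (hξ₂₂ : ξ₂₂ = Real.exp (μh + μρ + β * σρ ^ 2 + σhsq / 2 + σρ ^ 2 / 2)) :
    Real.log ξ₂₂ - Real.log η₂ - Real.log ηρ₂ ≠ 0 ∧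
    β = (Real.log η₂₂ - 2 * Real.log η₂) /
        (Real.log ξ₂₂ - Real.log η₂ - Real.log ηρ₂) := by
  subst hη₂ hηρ₂ hη₂₂ hξ₂₂
  rw [Real.log_exp, Real.log_exp, Real.log_exp, Real.log_exp]
  have hden : (μh + μρ + β * σρ ^ 2 + σhsq / 2 + σρ ^ 2 / 2) -
      (μh + σhsq / 2) - (μρ + σρ ^ 2 / 2) = β * σρ ^ 2 := by ring
  have hne : β * σρ ^ 2 ≠ 0 := mul_ne_zero hβ (by positivity)
  refine ⟨by rw [hden]; exact hne, ?_⟩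
  rw [hden]
  have hnum : (2 * μh + β ^ 2 * σρ ^ 2 + σhsq) - 2 * (μh + σhsq / 2)
      = β * (β * σρ ^ 2) := by ring
  rw [hnum, mul_div_assoc, div_self hne, mul_one]
end

section
/- Let μ₀ ∈ ℝ and σ₀ > 0, and let W be the Gaussian-log-Gaussian mixture distribution W = (gaussianReal μ₀ σ₀²).bind (fun s => gaussianReal 0 (exp s)). Then W is absolutely continuous with respect to Lebesgue measure on ℝ with density x ↦ (1/(2π·σ₀)) · ∫_{−∞}^{∞} exp(−(1/2)·[x²·exp(−s) + s + (s − μ₀)²/σ₀²]) ds. -/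
open MeasureTheory ProbabilityTheory Real
open scoped NNReal

lemma integrable_exp_quad {a : ℝ} (ha : 0 < a) (b c : ℝ) :
    Integrable fun x : ℝ => Real.exp (-a * x ^ 2 + b * x + c) := by
  have h := (integrable_cexp_quadratic (b := (a : ℂ)) (by simpa using ha) b c).norm
  refine h.congr (ae_of_all _ fun x => ?_)
  show ‖Complex.exp (-(a : ℂ) * (x : ℂ) ^ 2 + (b : ℂ) * (x : ℂ) + (c : ℂ))‖
      = Real.exp (-a * x ^ 2 + b * x + c)
  rw [show (-(a : ℂ) * (x : ℂ) ^ 2 + (b : ℂ) * (x : ℂ) + (c : ℂ))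
      = ((-a * x ^ 2 + b * x + c : ℝ) : ℂ) by push_cast; ring,
    Complex.norm_exp, Complex.ofReal_re]

lemma glg_prod_pdf (μ₀ : ℝ) (σ₀ : ℝ≥0) (hσ₀ : 0 < σ₀) (s x : ℝ) :
    gaussianPDFReal μ₀ (σ₀ ^ 2) s * gaussianPDFReal 0 (Real.exp s).toNNReal x
      = (1 / (2 * Real.pi * (σ₀ : ℝ))) *
        Real.exp (-(1 / 2) * (x ^ 2 * Real.exp (-s) + s + (s - μ₀) ^ 2 / (σ₀ : ℝ) ^ 2)) := by
  have hσ : (0 : ℝ) < σ₀ := hσ₀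
  have hπ : (0 : ℝ) < π := pi_pos
  have he : (0 : ℝ) < Real.exp s := Real.exp_pos s
  simp only [gaussianPDFReal, Real.coe_toNNReal _ he.le, sub_zero, NNReal.coe_pow]
  have h1 : Real.sqrt (2 * π * (σ₀ : ℝ) ^ 2) = Real.sqrt (2 * π) * σ₀ := by
    rw [Real.sqrt_mul (by positivity), Real.sqrt_sq hσ.le]
  have h2 : Real.sqrt (2 * π * Real.exp s) = Real.sqrt (2 * π) * Real.exp (s / 2) := by
    rw [Real.sqrt_mul (by positivity), Real.exp_half]
  have hexp : -(1 / 2) * (x ^ 2 * Real.exp (-s) + s + (s - μ₀) ^ 2 / (σ₀ : ℝ) ^ 2)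
      = (-(s - μ₀) ^ 2 / (2 * (σ₀ : ℝ) ^ 2)) + (-(s / 2)) + (-x ^ 2 / (2 * Real.exp s)) := by
    rw [Real.exp_neg]
    field_simp
    ring
  have h3 : Real.sqrt (2 * π) * Real.sqrt (2 * π) = 2 * π := Real.mul_self_sqrt (by positivity)
  have hc : 1 / (2 * π * (σ₀ : ℝ)) = (Real.sqrt (2 * π) * σ₀)⁻¹ * (Real.sqrt (2 * π))⁻¹ := by
    rw [one_div, ← mul_inv]
    congr 1
    rw [mul_right_comm (Real.sqrt (2 * π)) ((σ₀ : ℝ)), h3]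
  rw [h1, h2, hexp, Real.exp_add, Real.exp_add,
    show Real.exp (-(s / 2)) = (Real.exp (s / 2))⁻¹ by rw [← Real.exp_neg], hc]
  rw [mul_inv, mul_inv]
  ring

/-- Marginal density of the root wavelet coefficient in the GLG model: the
Gaussian-log-Gaussian mixture `W = (gaussianReal μ₀ σ₀²).bind (s ↦ gaussianReal 0 (exp s))`
has Lebesgue density
`x ↦ (1/(2π σ₀)) ∫ exp (-(1/2)[x² exp (-s) + s + (s-μ₀)²/σ₀²]) ds`. -/
theorem glg_marginal_density (μ₀ : ℝ) (σ₀ : ℝ≥0) (hσ₀ : 0 < σ₀)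
    (W : Measure ℝ)
    (hW : W = (gaussianReal μ₀ (σ₀ ^ 2)).bind
      (fun s => gaussianReal 0 (Real.exp s).toNNReal)) :
    W = volume.withDensity (fun x => ENNReal.ofReal
      ((1 / (2 * Real.pi * (σ₀ : ℝ))) * ∫ t : ℝ,
        Real.exp (-(1 / 2) * (x ^ 2 * Real.exp (-t) + t +
          (t - μ₀) ^ 2 / (σ₀ : ℝ) ^ 2)))) := by
  subst hW
  have hσ : (0 : ℝ) < σ₀ := hσ₀
  have hπ : (0 : ℝ) < π := pi_pos
  have hv2 : (σ₀ ^ 2 : ℝ≥0) ≠ 0 := by positivity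
  have hne : ∀ s : ℝ, (Real.exp s).toNNReal ≠ 0 := fun s => by
    simp [Real.toNNReal_eq_zero, (Real.exp_pos s).not_ge]
  -- joint measurability of the conditional density
  have hKcont : Continuous fun p : ℝ × ℝ => (Real.sqrt (2 * π * Real.exp p.1))⁻¹ *
      Real.exp (-p.2 ^ 2 / (2 * Real.exp p.1)) := by
    apply Continuous.mul
    · exact Continuous.inv₀ (by continuity) (fun p => by positivity)
    · exact Real.continuous_exp.comp
        (Continuous.div (by continuity) (by continuity) (fun p => by positivity))
  have hKeq : (fun p : ℝ × ℝ => gaussianPDF 0 (Real.exp p.1).toNNReal p.2)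
      = fun p : ℝ × ℝ => ENNReal.ofReal ((Real.sqrt (2 * π * Real.exp p.1))⁻¹ *
        Real.exp (-p.2 ^ 2 / (2 * Real.exp p.1))) := by
    funext p
    simp [gaussianPDF, gaussianPDFReal, Real.coe_toNNReal _ (Real.exp_pos p.1).le, sub_zero]
  have hK : Measurable fun p : ℝ × ℝ => gaussianPDF 0 (Real.exp p.1).toNNReal p.2 := by
    rw [hKeq]
    exact ENNReal.measurable_ofReal.comp hKcont.measurable
  have hA' : ∀ {A : Set ℝ}, MeasurableSet A →
      Measurable fun s => ∫⁻ x in A, gaussianPDF 0 (Real.exp s).toNNReal x := by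
    intro A hA
    exact hK.lintegral_prod_right' (ν := volume.restrict A)
  have hker : Measurable fun s : ℝ => gaussianReal 0 (Real.exp s).toNNReal := by
    apply Measure.measurable_of_measurable_coe
    intro A hA
    have h : (fun s => gaussianReal 0 (Real.exp s).toNNReal A)
        = fun s => ∫⁻ x in A, gaussianPDF 0 (Real.exp s).toNNReal x :=
      funext fun s => gaussianReal_apply 0 (hne s) A
    rw [h]
    exact hA' hA
  have hprod : Measurable fun p : ℝ × ℝ =>
      gaussianPDF μ₀ (σ₀ ^ 2) p.1 * gaussianPDF 0 (Real.exp p.1).toNNReal p.2 :=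
    ((measurable_gaussianPDF μ₀ _).comp measurable_fst).mul hK
  -- the pointwise marginal density
  have step5 : ∀ x : ℝ,
      (∫⁻ s, gaussianPDF μ₀ (σ₀ ^ 2) s * gaussianPDF 0 (Real.exp s).toNNReal x)
        = ENNReal.ofReal ((1 / (2 * Real.pi * (σ₀ : ℝ))) * ∫ t : ℝ,
            Real.exp (-(1 / 2) * (x ^ 2 * Real.exp (-t) + t +
              (t - μ₀) ^ 2 / (σ₀ : ℝ) ^ 2))) := by
    intro x
    have hpt : ∀ s : ℝ, gaussianPDF μ₀ (σ₀ ^ 2) s * gaussianPDF 0 (Real.exp s).toNNReal x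
        = ENNReal.ofReal ((1 / (2 * Real.pi * (σ₀ : ℝ))) *
            Real.exp (-(1 / 2) * (x ^ 2 * Real.exp (-s) + s +
              (s - μ₀) ^ 2 / (σ₀ : ℝ) ^ 2))) := by
      intro s
      rw [gaussianPDF, gaussianPDF, ← ENNReal.ofReal_mul (gaussianPDFReal_nonneg _ _ _),
        glg_prod_pdf μ₀ σ₀ hσ₀ s x]
    -- integrability of the integrand
    have hbound : Integrable fun s : ℝ => (1 / (2 * Real.pi * (σ₀ : ℝ))) *
        Real.exp (-(1 / (2 * (σ₀ : ℝ) ^ 2)) * s ^ 2 + (μ₀ / (σ₀ : ℝ) ^ 2 - 1 / 2) * s +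
          (-(μ₀ ^ 2) / (2 * (σ₀ : ℝ) ^ 2))) :=
      (integrable_exp_quad (by positivity) _ _).const_mul _
    have hint : Integrable fun s : ℝ => (1 / (2 * Real.pi * (σ₀ : ℝ))) *
        Real.exp (-(1 / 2) * (x ^ 2 * Real.exp (-s) + s +
          (s - μ₀) ^ 2 / (σ₀ : ℝ) ^ 2)) := by
      refine hbound.mono' ?_ ?_
      · apply Continuous.aestronglyMeasurable
        fun_prop
      · refine ae_of_all _ fun s => ?_
        rw [Real.norm_eq_abs, abs_of_nonneg (by positivity)]
        refine mul_le_mul_of_nonneg_left ?_ (by positivity)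
        refine Real.exp_le_exp.2 ?_
        have key : -(1 / (2 * (σ₀ : ℝ) ^ 2)) * s ^ 2 + (μ₀ / (σ₀ : ℝ) ^ 2 - 1 / 2) * s +
            (-(μ₀ ^ 2) / (2 * (σ₀ : ℝ) ^ 2))
            = -(1 / 2) * (s + (s - μ₀) ^ 2 / (σ₀ : ℝ) ^ 2) := by
          field_simp
          ring
        have h0 : 0 ≤ x ^ 2 * Real.exp (-s) := by positivity
        rw [key]
        nlinarith [h0]
    rw [lintegral_congr hpt,
      ← ofReal_integral_eq_lintegral_ofReal hint
        (ae_of_all _ fun s => by positivity),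
      integral_const_mul]
  refine Measure.ext fun A hA => ?_
  rw [Measure.bind_apply hA hker.aemeasurable, withDensity_apply _ hA]
  calc (∫⁻ s, gaussianReal 0 (Real.exp s).toNNReal A ∂(gaussianReal μ₀ (σ₀ ^ 2)))
      = ∫⁻ s, (∫⁻ x in A, gaussianPDF 0 (Real.exp s).toNNReal x)
          ∂(gaussianReal μ₀ (σ₀ ^ 2)) :=
        lintegral_congr fun s => gaussianReal_apply 0 (hne s) A
    _ = ∫⁻ s, gaussianPDF μ₀ (σ₀ ^ 2) s *
          ∫⁻ x in A, gaussianPDF 0 (Real.exp s).toNNReal x := by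
        rw [gaussianReal_of_var_ne_zero μ₀ hv2,
          lintegral_withDensity_eq_lintegral_mul _ (measurable_gaussianPDF _ _) (hA' hA)]
        rfl
    _ = ∫⁻ s, ∫⁻ x in A,
          gaussianPDF μ₀ (σ₀ ^ 2) s * gaussianPDF 0 (Real.exp s).toNNReal x :=
        lintegral_congr fun s =>
          (lintegral_const_mul _ (measurable_gaussianPDF 0 _)).symm
    _ = ∫⁻ x in A, ∫⁻ s,
          gaussianPDF μ₀ (σ₀ ^ 2) s * gaussianPDF 0 (Real.exp s).toNNReal x :=
        lintegral_lintegral_swap hprod.aemeasurable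
    _ = ∫⁻ x in A, ENNReal.ofReal ((1 / (2 * Real.pi * (σ₀ : ℝ))) * ∫ t : ℝ,
          Real.exp (-(1 / 2) * (x ^ 2 * Real.exp (-t) + t +
            (t - μ₀) ^ 2 / (σ₀ : ℝ) ^ 2))) :=
        lintegral_congr fun x => step5 x
end
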